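/- arXiv:0904.4519 — 6 statements merged into one kernel-verified Lean document; each statement's English description precedes it below -/
import Mathlib

section
/- Let S_d denote the space of symmetric d×d real matrices. Let G : S_d → ℝ satisfy G(A + B) ≤ G(A) + G(B), G(λA) = λG(A) for all λ ≥ 0, and G(A) ≤ G(B) whenever B − A is positive semidefinite. Then there exists a bounded set Σ of positive semidefinite symmetric d×d matrices such that G(A) = (1/2) sup_{γ∈Σ} tr(Aγ) for every A ∈ S_d, and for each A the supremum is attained. -/
/-!
Extend `G` to all matrices by `M ↦ G((M + Mᵀ)/2)`. This extension is still sublinear, so by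
Hahn–Banach each symmetric `A` admits a linear functional `g` below it with `g A = G A`, and
monotonicity of `G` makes `g` nonnegative on positive semidefinite matrices. Writing
`g B = tr(B γ)/2` with `γ` symmetric, nonnegativity on the rank-one matrices `x xᵀ` says that `γ`
is positive semidefinite. So the set of positive semidefinite `γ` with `tr(B γ)/2 ≤ G B` for all
symmetric `B` attains `G A`, and its entries are bounded by `tr γ ≤ 2 G(1)`.
-/

open Matrix

theorem exists_linearMap_le_sublinear_eq {E : Type*} [AddCommGroup E] [Module ℝ E] (N : E → ℝ)
    (N_hom : ∀ c : ℝ, 0 < c → ∀ x, N (c • x) = c * N x) (N_add : ∀ x y, N (x + y) ≤ N x + N y)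
    (x : E) : ∃ g : E →ₗ[ℝ] ℝ, g x = N x ∧ ∀ y, g y ≤ N y := by
  have N_zero : N 0 = 0 := by
    have h := N_hom 2 two_pos 0
    rw [smul_zero] at h
    linarith
  have smul_le : ∀ c : ℝ, c * N x ≤ N (c • x) := by
    intro c
    rcases lt_trichotomy c 0 with hc | rfl | hc
    · have h := N_add x (-x)
      rw [add_neg_cancel, N_zero] at h
      rw [← neg_neg c, neg_smul, ← smul_neg, N_hom (-c) (neg_pos.2 hc)]
      nlinarith
    · simp [N_zero]
    · rw [N_hom c hc]
  let f := LinearPMap.mkSpanSingleton' (σ := RingHom.id ℝ) x (N x) fun c hc => by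
    rcases smul_eq_zero.mp hc with rfl | rfl
    · exact zero_smul _ _
    · rw [N_zero, smul_zero]
  obtain ⟨g, hgf, hgN⟩ := exists_extension_of_le_sublinear f N N_hom N_add <| by
    rintro ⟨y, hy⟩
    obtain ⟨c, rfl⟩ := Submodule.mem_span_singleton.mp hy
    exact (LinearPMap.mkSpanSingleton'_apply _ _ _ c hy).trans_le (smul_le c)
  exact ⟨g, (hgf ⟨x, Submodule.mem_span_singleton_self x⟩).trans
    (LinearPMap.mkSpanSingleton'_apply_self _ _ _ _), hgN⟩

namespace Matrix

theorem exists_eq_trace_mul {n R : Type*} [Fintype n] [DecidableEq n] [CommSemiring R]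
    (g : Matrix n n R →ₗ[R] R) : ∃ M : Matrix n n R, ∀ B, g B = (B * M).trace := by
  refine ⟨of fun i j => g (single j i 1), fun B => ?_⟩
  have : g = (traceLinearMap n R R).comp (LinearMap.mulRight R (of fun i j => g (single j i 1))) :=
    (stdBasis R n n).ext fun ⟨i, j⟩ => by simp [stdBasis_eq_single, trace_single_mul]
  exact LinearMap.congr_fun this B

theorem trace_vecMulVec_mul {n R : Type*} [Fintype n] [CommSemiring R] (x y : n → R)
    (M : Matrix n n R) : (vecMulVec x y * M).trace = y ⬝ᵥ (M *ᵥ x) := by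
  rw [vecMulVec_mul, trace_vecMulVec, dotProduct_comm, dotProduct_mulVec]

theorem PosSemidef.abs_apply_le_trace {n : Type*} [Fintype n] [DecidableEq n]
    {A : Matrix n n ℝ} (hA : A.PosSemidef) (i j : n) : |A i j| ≤ A.trace := by
  have hji : A j i = A i j := by simpa using hA.1.apply i j
  have quad : ∀ s : ℝ, 0 ≤ A i i + 2 * s * A i j + s ^ 2 * A j j := fun s => by
    have := hA.dotProduct_mulVec_nonneg (Pi.single i 1 + s • Pi.single j 1)
    simp [dotProduct_add, add_dotProduct, mulVec_add, mulVec_smul, hji] at this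
    nlinarith
  have hdiag : ∀ k, A k k ≤ A.trace := fun k =>
    Finset.single_le_sum (f := A.diag) (fun _ _ => hA.diag_nonneg) (Finset.mem_univ k)
  have h₁ := quad 1
  have h₂ := quad (-1)
  rw [abs_le]
  constructor <;> nlinarith [hdiag i, hdiag j]

section SymmPart

variable {n K : Type*} [Field K]

def symmPart : Matrix n n K →ₗ[K] Matrix n n K :=
  (2⁻¹ : K) • (LinearMap.id + (transposeLinearEquiv n n K K).toLinearMap)

theorem symmPart_apply (M : Matrix n n K) : symmPart M = (2⁻¹ : K) • (M + Mᵀ) := rfl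

theorem isSymm_symmPart (M : Matrix n n K) : (symmPart M).IsSymm := by
  rw [symmPart_apply, IsSymm, transpose_smul, transpose_add, transpose_transpose, add_comm]

theorem symmPart_of_isSymm [NeZero (2 : K)] {M : Matrix n n K} (hM : M.IsSymm) :
    symmPart M = M := by
  rw [symmPart_apply, hM.eq, ← two_smul K M, smul_smul, inv_mul_cancel₀ two_ne_zero, one_smul]

end SymmPart

theorem exists_posSemidef_half_trace_mul_eq {n : Type*} [Fintype n] [DecidableEq n]
    (g : Matrix n n ℝ →ₗ[ℝ] ℝ) (hg : ∀ P : Matrix n n ℝ, P.PosSemidef → 0 ≤ g P) :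
    ∃ γ : Matrix n n ℝ, γ.PosSemidef ∧ ∀ B, B.IsSymm → 1 / 2 * (B * γ).trace = g B := by
  obtain ⟨M, hM⟩ := exists_eq_trace_mul g
  have half_trace_eq : ∀ B, B.IsSymm → 1 / 2 * (B * (M + Mᵀ)).trace = g B := fun B hB => by
    rw [mul_add, trace_add, hM, ← trace_transpose (B * Mᵀ), transpose_mul, transpose_transpose,
      hB.eq, trace_mul_comm M B]
    ring
  refine ⟨M + Mᵀ, .of_dotProduct_mulVec_nonneg ?_ fun x => ?_, half_trace_eq⟩
  · rw [isHermitian_iff_isSymm, IsSymm, transpose_add, transpose_transpose, add_comm]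
  · have hx := posSemidef_vecMulVec_self_star x
    have := half_trace_eq _ (isHermitian_iff_isSymm.mp hx.1)
    rw [trace_vecMulVec_mul] at this
    linarith [hg _ hx]

end Matrix

theorem exists_linearMap_le_comp_symmPart {n : Type*} {G : Matrix n n ℝ → ℝ}
    (hsub : ∀ A B : Matrix n n ℝ, A.IsSymm → B.IsSymm → G (A + B) ≤ G A + G B)
    (hpos : ∀ l : ℝ, 0 ≤ l → ∀ A : Matrix n n ℝ, A.IsSymm → G (l • A) = l * G A)
    (A : Matrix n n ℝ) :
    ∃ g : Matrix n n ℝ →ₗ[ℝ] ℝ, g A = G (symmPart A) ∧ ∀ B, g B ≤ G (symmPart B) :=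
  exists_linearMap_le_sublinear_eq (G ∘ symmPart)
    (fun c hc M => by simp [hpos c hc.le _ (isSymm_symmPart M)])
    (fun M N => by simpa using hsub _ _ (isSymm_symmPart M) (isSymm_symmPart N)) A

theorem nonneg_of_posSemidef_of_le_comp_symmPart {n : Type*} {G : Matrix n n ℝ → ℝ}
    (hG0 : G 0 = 0)
    (hmono : ∀ A B : Matrix n n ℝ, A.IsSymm → B.IsSymm → (B - A).PosSemidef → G A ≤ G B)
    {g : Matrix n n ℝ →ₗ[ℝ] ℝ} (hg : ∀ B, g B ≤ G (symmPart B))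
    {P : Matrix n n ℝ} (hP : P.PosSemidef) : 0 ≤ g P := by
  have hP' : (-P).IsSymm := (isHermitian_iff_isSymm.mp hP.1).neg
  have h₁ := hg (-P)
  have h₂ := hmono (-P) 0 hP' isSymm_zero (by simpa using hP)
  rw [symmPart_of_isSymm hP', map_neg] at h₁
  linarith

/-- Representation of a monotone sublinear function `G` on the symmetric `d × d` matrices:
there is a bounded set `S` of positive semidefinite symmetric matrices with
`G(A) = (1/2) max_{γ ∈ S} tr(Aγ)` for all symmetric `A`, the supremum being attained. -/
theorem stmt2 {d : ℕ} (G : Matrix (Fin d) (Fin d) ℝ → ℝ)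
    (hsub : ∀ A B : Matrix (Fin d) (Fin d) ℝ,
      A.IsSymm → B.IsSymm → G (A + B) ≤ G A + G B)
    (hpos : ∀ (l : ℝ), 0 ≤ l → ∀ A : Matrix (Fin d) (Fin d) ℝ,
      A.IsSymm → G (l • A) = l * G A)
    (hmono : ∀ A B : Matrix (Fin d) (Fin d) ℝ,
      A.IsSymm → B.IsSymm → (B - A).PosSemidef → G A ≤ G B) :
    ∃ S : Set (Matrix (Fin d) (Fin d) ℝ),
      (∀ γ ∈ S, γ.PosSemidef) ∧
      (∃ R : ℝ, ∀ γ ∈ S, ∀ i j, |γ i j| ≤ R) ∧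
      (∀ A : Matrix (Fin d) (Fin d) ℝ, A.IsSymm →
        IsGreatest {r : ℝ | ∃ γ ∈ S, r = (1 / 2) * (A * γ).trace} (G A)) := by
  refine ⟨{γ | γ.PosSemidef ∧ ∀ B, B.IsSymm → 1 / 2 * (B * γ).trace ≤ G B}, fun γ hγ => hγ.1,
    ⟨2 * G 1, fun γ hγ i j => ?_⟩, fun A hA => ⟨?_, ?_⟩⟩
  · have := hγ.2 1 isSymm_one
    rw [one_mul] at this
    linarith [hγ.1.abs_apply_le_trace i j]
  · obtain ⟨g, hgA, hgG⟩ := exists_linearMap_le_comp_symmPart hsub hpos A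
    have hG0 : G 0 = 0 := by simpa using hpos 0 le_rfl 0 isSymm_zero
    obtain ⟨γ, hγ, hγg⟩ := exists_posSemidef_half_trace_mul_eq g fun _ hP =>
      nonneg_of_posSemidef_of_le_comp_symmPart hG0 hmono hgG hP
    refine ⟨γ, ⟨hγ, fun B hB => ?_⟩, ?_⟩
    · rw [hγg B hB]
      exact (hgG B).trans_eq (congrArg G (symmPart_of_isSymm hB))
    · rw [hγg A hA, hgA, symmPart_of_isSymm hA]
  · rintro r ⟨γ, hγ, rfl⟩
    exact hγ.2 A hA
end

section
/- Let Ω be a set, H a linear space of real-valued functions on Ω containing all constant functions, and Ê : H → ℝ a sublinear expectation. Let N ≥ 1, let X : Ω → ℝ^N be a map, and let φ_n : ℝ^N → ℝ (n ≥ 1) be continuous functions with φ_n ≥ φ_{n+1} ≥ 0 pointwise and φ_n(x) → 0 for every x ∈ ℝ^N. Assume that φ_n ∘ X ∈ H for every n and that the function ω ↦ φ₁(X(ω))·|X(ω)| belongs to H. Then Ê[φ_n ∘ X] decreases to 0 as n → ∞. -/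
open Filter Topology

/-- Lemma 3 of the paper: if `Ê` is a sublinear expectation on a linear space `H` of
real-valued functions containing the constants, `X : Ω → ℝ^N`, and `φ_n` are continuous,
nonnegative, pointwise decreasing to `0`, with `φ_n ∘ X ∈ H` and `φ₁(X)·|X| ∈ H`, then
`Ê[φ_n ∘ X]` decreases to `0`. -/
theorem stmt3 {Ω : Type*} (H : Submodule ℝ (Ω → ℝ))
    (hconst : ∀ c : ℝ, (fun _ : Ω => c) ∈ H)
    (Ehat : H → ℝ)
    (hmono : ∀ X Y : H, (X : Ω → ℝ) ≤ (Y : Ω → ℝ) → Ehat X ≤ Ehat Y)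
    (hcp : ∀ c : ℝ, Ehat ⟨fun _ : Ω => c, hconst c⟩ = c)
    (hsub : ∀ X Y : H, Ehat (X + Y) ≤ Ehat X + Ehat Y)
    (hpos : ∀ (l : ℝ), 0 ≤ l → ∀ X : H, Ehat (l • X) = l * Ehat X)
    {N : ℕ} (hN : 1 ≤ N)
    (X : Ω → EuclideanSpace ℝ (Fin N))
    (φ : ℕ → EuclideanSpace ℝ (Fin N) → ℝ)
    (hcont : ∀ n, Continuous (φ n))
    (hnonneg : ∀ n x, 0 ≤ φ n x)
    (hdec : ∀ n x, φ (n + 1) x ≤ φ n x)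
    (hlim : ∀ x, Tendsto (fun n => φ n x) atTop (𝓝 0))
    (hmem : ∀ n, (fun ω => φ n (X ω)) ∈ H)
    (hmem1 : (fun ω => φ 0 (X ω) * ‖X ω‖) ∈ H) :
    Antitone (fun n => Ehat ⟨fun ω => φ n (X ω), hmem n⟩) ∧
    Tendsto (fun n => Ehat ⟨fun ω => φ n (X ω), hmem n⟩) atTop (𝓝 0) := by
  -- pointwise antitonicity of φ in n
  have hφanti : ∀ x, Antitone (fun n => φ n x) := fun x =>
    antitone_nat_of_succ_le (fun n => hdec n x)
  set E : ℕ → ℝ := fun n => Ehat ⟨fun ω => φ n (X ω), hmem n⟩ with hE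
  have hanti : Antitone E := by
    apply antitone_nat_of_succ_le
    intro n
    exact hmono _ _ (fun ω => hdec n (X ω))
  have hEnonneg : ∀ n, 0 ≤ E n := by
    intro n
    have := hmono ⟨fun _ : Ω => (0 : ℝ), hconst 0⟩ ⟨fun ω => φ n (X ω), hmem n⟩
      (fun ω => hnonneg n (X ω))
    rw [hcp 0] at this
    exact this
  refine ⟨hanti, ?_⟩
  set g : H := ⟨fun ω => φ 0 (X ω) * ‖X ω‖, hmem1⟩ with hg
  have hgnn : (0 : ℝ) ≤ Ehat g := by
    have := hmono ⟨fun _ : Ω => (0 : ℝ), hconst 0⟩ g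
      (fun ω => mul_nonneg (hnonneg 0 (X ω)) (norm_nonneg _))
    rw [hcp 0] at this
    exact this
  set K : ℝ := Ehat g with hK
  rw [Metric.tendsto_atTop]
  intro ε hε
  -- choose R
  set R : ℝ := 2 * (K + 1) / ε with hR
  have hRpos : 0 < R := by positivity
  have hKR : K / R < ε / 2 := by
    rw [div_lt_iff₀ hRpos, hR]
    have heq : ε / 2 * (2 * (K + 1) / ε) = K + 1 := by
      field_simp
    rw [heq]
    linarith
  -- compactness: find n with φ n < ε/2 on closedBall 0 R
  have hcomp : IsCompact (Metric.closedBall (0 : EuclideanSpace ℝ (Fin N)) R) :=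
    isCompact_closedBall _ _
  have hcov : Metric.closedBall (0 : EuclideanSpace ℝ (Fin N)) R ⊆
      ⋃ n : ℕ, {x | φ n x < ε / 2} := by
    intro x _
    have := (hlim x).eventually (eventually_lt_nhds (by linarith : (0:ℝ) < ε / 2))
    obtain ⟨n, hn⟩ := this.exists
    exact Set.mem_iUnion.2 ⟨n, hn⟩
  obtain ⟨n₀, hn₀⟩ := hcomp.elim_directed_cover _
    (fun n => isOpen_lt (hcont n) continuous_const) hcov
    (by
      intro m n
      refine ⟨max m n, ?_, ?_⟩
      · intro x hx
        exact lt_of_le_of_lt (hφanti x (le_max_left m n)) hx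
      · intro x hx
        exact lt_of_le_of_lt (hφanti x (le_max_right m n)) hx)
  refine ⟨n₀, fun n hn => ?_⟩
  rw [Real.dist_eq, sub_zero, abs_of_nonneg (hEnonneg n)]
  -- pointwise bound: φ n (X ω) ≤ ε/2 + (1/R) * (φ 0 (X ω) * ‖X ω‖)
  have hptwise : ∀ ω, φ n (X ω) ≤ ε / 2 + (1 / R) * (φ 0 (X ω) * ‖X ω‖) := by
    intro ω
    by_cases hball : ‖X ω‖ ≤ R
    · have h1 : φ n (X ω) < ε / 2 := by
        have hx : X ω ∈ Metric.closedBall (0 : EuclideanSpace ℝ (Fin N)) R := by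
          simpa [Metric.mem_closedBall, dist_eq_norm] using hball
        exact lt_of_le_of_lt (hφanti (X ω) hn) (hn₀ hx)
      have h2 : 0 ≤ (1 / R) * (φ 0 (X ω) * ‖X ω‖) := by
        have := mul_nonneg (hnonneg 0 (X ω)) (norm_nonneg (X ω))
        positivity
      linarith
    · push_neg at hball
      have h1 : φ n (X ω) ≤ φ 0 (X ω) := hφanti (X ω) (Nat.zero_le n)
      have h2 : φ 0 (X ω) ≤ (1 / R) * (φ 0 (X ω) * ‖X ω‖) := by
        rw [one_div, ← mul_assoc, mul_comm R⁻¹, mul_assoc]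
        nth_rewrite 1 [← mul_one (φ 0 (X ω))]
        apply mul_le_mul_of_nonneg_left _ (hnonneg 0 (X ω))
        calc (1:ℝ) = R⁻¹ * R := (inv_mul_cancel₀ hRpos.ne').symm
          _ ≤ R⁻¹ * ‖X ω‖ :=
              mul_le_mul_of_nonneg_left hball.le (inv_nonneg.2 hRpos.le)
      have h3 : 0 ≤ ε / 2 := by linarith
      linarith
  -- apply the sublinear expectation
  have hstep : E n ≤ Ehat (⟨fun _ : Ω => ε / 2, hconst _⟩ + (1 / R) • g) := by
    apply hmono
    intro ω
    simpa using hptwise ω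
  have hstep2 : Ehat (⟨fun _ : Ω => ε / 2, hconst _⟩ + (1 / R) • g) ≤
      ε / 2 + (1 / R) * K := by
    calc Ehat (⟨fun _ : Ω => ε / 2, hconst _⟩ + (1 / R) • g)
        ≤ Ehat ⟨fun _ : Ω => ε / 2, hconst _⟩ + Ehat ((1 / R) • g) := hsub _ _
      _ = ε / 2 + (1 / R) * K := by
          rw [hcp, hpos (1 / R) (by positivity) g]
  have : (1 / R) * K < ε / 2 := by
    rw [one_div, inv_mul_eq_div]
    exact hKR
  linarith [hstep.trans hstep2]
end

section
/- Let 𝒬 be a nonempty family of probability measures on (Ω̄, B(Ω̄)) such that Q({ω̄ : ω̄(0) = 0}) = 1 for every Q ∈ 𝒬 and there is a constant C with sup_{Q∈𝒬} ∫ |ω̄(t) − ω̄(s)|⁴ dQ ≤ C·|t − s|² for all s, t ≥ 0. Then there exists a map B̃ : [0,∞) × Ω̄ → ℝ^d such that: (i) for every ω̄ ∈ Ω̄ the path t ↦ B̃(t, ω̄) is continuous and B̃(0, ω̄) = 0; (ii) for every t ≥ 0 the map ω̄ ↦ B̃(t, ω̄) is B(Ω̄)-measurable; and (iii) for every t ≥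 0, sup_{Q∈𝒬} Q({ω̄ : B̃(t, ω̄) ≠ ω̄(t)}) = 0. -/
open MeasureTheory Filter Topology
open scoped NNReal ENNReal

noncomputable section

/-- The space of all (not necessarily continuous) paths `ω̄ : [0,∞) → ℝ^d`,
with the product σ-algebra generated by the coordinate maps. -/
abbrev OmegaBar (d : ℕ) := ℝ≥0 → EuclideanSpace ℝ (Fin d)

/-!
By Chebyshev's inequality and the moment bound, `Q(|ω(t) - ω(s)| ≥ (7/8)ⁿ) ≤ C (1024/2401)ⁿ`
whenever `|t - s| ≤ 2⁻ⁿ`. Since `2 · 1024/2401 < 1`, the `N 2ⁿ` dyadic increments of level `n`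
in `[0, N]` still give a summable series, so by Borel–Cantelli `Q`-almost every path belongs to
the set `goodPaths` of paths whose level-`n` dyadic increments on each `[0, N]` are eventually
at most `(7/8)ⁿ`; this set does not depend on `Q`. Two consecutive upper dyadic approximations
`⌈t 2ⁿ⌉ / 2ⁿ` of `t` differ by at most one dyadic step, so along a good path the values at these
approximations converge geometrically fast, uniformly in `t ≤ N`, and the limit is continuous.
The modification is this limit minus `ω(0)` on good paths and `0` elsewhere: a pointwise limit
of measurable maps, and almost surely equal to `ω(t)` by the same Chebyshev and Borel–Cantelli
argument applied to `ω(⌈t 2ⁿ⌉ / 2ⁿ) - ω(t)`.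
-/

lemma exists_tendsto_of_dist_le_geometric_of_ge {X : Type*} [PseudoMetricSpace X] [CompleteSpace X]
    {u : ℕ → X} {C r : ℝ} (hr : r < 1) {m : ℕ}
    (hu : ∀ n ≥ m, dist (u n) (u (n + 1)) ≤ C * r ^ n) : ∃ L, Tendsto u atTop (𝓝 L) := by
  have hv : CauchySeq fun k => u (k + m) :=
    cauchySeq_of_le_geometric r (C * r ^ m) hr fun k => by
      simpa only [add_right_comm k m 1, pow_add, mul_assoc, mul_comm (r ^ k)] using
        hu (k + m) (Nat.le_add_left m k)
  obtain ⟨L, hL⟩ := cauchySeq_tendsto_of_complete hv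
  exact ⟨L, (tendsto_add_atTop_iff_nat m).1 hL⟩

lemma dist_le_of_le_geometric_of_tendsto_of_ge {X : Type*} [PseudoMetricSpace X]
    {u : ℕ → X} {C r : ℝ} (hr : r < 1) {m : ℕ}
    (hu : ∀ n ≥ m, dist (u n) (u (n + 1)) ≤ C * r ^ n) {L : X} (hL : Tendsto u atTop (𝓝 L))
    {n : ℕ} (hn : m ≤ n) : dist (u n) L ≤ C * r ^ n / (1 - r) := by
  have := dist_le_of_le_geometric_of_tendsto r (C * r ^ n) hr (f := fun k => u (k + n))
    (fun k => calc
      dist (u (k + n)) (u (k + 1 + n)) = dist (u (k + n)) (u (k + n + 1)) := by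
        rw [add_right_comm]
      _ ≤ C * r ^ (k + n) := hu _ (by omega)
      _ = C * r ^ n * r ^ k := by ring)
    ((tendsto_add_atTop_iff_nat n).2 hL) 0
  simpa using this

lemma ae_eventually_notMem_of_le_geometric {α : Type*} [MeasurableSpace α] {μ : Measure α}
    {s : ℕ → Set α} {K r : ℝ} (hr₀ : 0 ≤ r) (hr : r < 1)
    (hs : ∀ n, μ (s n) ≤ ENNReal.ofReal (K * r ^ n)) : ∀ᵐ x ∂μ, ∀ᶠ n in atTop, x ∉ s n := by
  refine ae_eventually_notMem (ne_top_of_le_ne_top ?_ (ENNReal.tsum_le_tsum hs))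
  simp only [ENNReal.ofReal_mul' (pow_nonneg hr₀ _), ENNReal.ofReal_pow hr₀, ENNReal.tsum_mul_left,
    ENNReal.tsum_geometric]
  exact ENNReal.mul_ne_top ENNReal.ofReal_ne_top
    (ENNReal.inv_ne_top.2 (tsub_pos_of_lt (ENNReal.ofReal_lt_one.2 hr)).ne')

namespace DyadicModification

def dyadic (k n : ℕ) : ℝ≥0 := k / 2 ^ n

lemma dyadic_two_mul (k n : ℕ) : dyadic (2 * k) (n + 1) = dyadic k n := by
  rw [dyadic, dyadic, pow_succ', Nat.cast_mul, Nat.cast_ofNat, mul_div_mul_left _ _ two_ne_zero]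

lemma dist_dyadic_succ (k n : ℕ) : dist (dyadic (k + 1) n) (dyadic k n) = (2 ^ n)⁻¹ := by
  rw [NNReal.dist_eq, dyadic, dyadic]
  push_cast
  rw [← sub_div, add_sub_cancel_left, abs_of_pos (by positivity), one_div]

def dyadicCeil (t : ℝ≥0) (n : ℕ) : ℕ := ⌈t * 2 ^ n⌉₊

def dyadicApprox (t : ℝ≥0) (n : ℕ) : ℝ≥0 := dyadic (dyadicCeil t n) n

lemma dyadicCeil_succ (t : ℝ≥0) (n : ℕ) :
    dyadicCeil t (n + 1) = 2 * dyadicCeil t n ∨ dyadicCeil t (n + 1) + 1 = 2 * dyadicCeil t n := by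
  have hle : dyadicCeil t (n + 1) ≤ 2 * dyadicCeil t n := by
    rw [dyadicCeil, Nat.ceil_le, pow_succ', Nat.cast_mul, Nat.cast_ofNat, mul_left_comm]
    gcongr; exact Nat.le_ceil _
  have hge : 2 * dyadicCeil t n < dyadicCeil t (n + 1) + 2 := by
    have h1 : (dyadicCeil t n : ℝ≥0) < t * 2 ^ n + 1 := Nat.ceil_lt_add_one zero_le
    have h2 : t * 2 ^ (n + 1) ≤ dyadicCeil t (n + 1) := Nat.le_ceil _
    have : ((2 * dyadicCeil t n : ℕ) : ℝ≥0) < (dyadicCeil t (n + 1) + 2 : ℕ) := by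
      push_cast
      rw [pow_succ] at h2
      calc 2 * (dyadicCeil t n : ℝ≥0) < 2 * (t * 2 ^ n + 1) := by gcongr
        _ = t * (2 ^ n * 2) + 2 := by ring
        _ ≤ _ := by gcongr
    exact_mod_cast this
  omega

lemma dyadicCeil_le_add_one {s t : ℝ≥0} {n : ℕ} (h : s ≤ t + (2 ^ n)⁻¹) :
    dyadicCeil s n ≤ dyadicCeil t n + 1 := by
  rw [dyadicCeil, Nat.ceil_le]
  calc s * 2 ^ n ≤ (t + (2 ^ n)⁻¹) * 2 ^ n := by gcongr
    _ = t * 2 ^ n + 1 := by rw [add_mul, inv_mul_cancel₀ (by positivity)]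
    _ ≤ _ := by push_cast; gcongr; exact Nat.le_ceil _

lemma dyadicCeil_le {t : ℝ≥0} {N : ℕ} (h : t ≤ N) (n : ℕ) : dyadicCeil t n ≤ N * 2 ^ n := by
  rw [dyadicCeil, Nat.ceil_le]
  push_cast
  gcongr

lemma le_dyadicApprox (t : ℝ≥0) (n : ℕ) : t ≤ dyadicApprox t n := by
  rw [dyadicApprox, dyadic, le_div_iff₀ (by positivity)]
  exact Nat.le_ceil _

lemma dyadicApprox_le (t : ℝ≥0) (n : ℕ) : dyadicApprox t n ≤ t + (2 ^ n)⁻¹ := by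
  rw [dyadicApprox, dyadic, div_le_iff₀ (by positivity), add_mul, inv_mul_cancel₀ (by positivity)]
  exact (Nat.ceil_lt_add_one zero_le).le

lemma dist_dyadicApprox_le (t : ℝ≥0) (n : ℕ) : dist (dyadicApprox t n) t ≤ (2 ^ n)⁻¹ := by
  have h₁ : (t : ℝ) ≤ dyadicApprox t n := le_dyadicApprox t n
  have h₂ : (dyadicApprox t n : ℝ) ≤ t + (2 ^ n)⁻¹ := by exact_mod_cast dyadicApprox_le t n
  have h₃ : (0 : ℝ) ≤ (2 ^ n)⁻¹ := by positivity
  rw [NNReal.dist_eq, abs_le]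
  constructor <;> linarith

@[simp] lemma dyadicApprox_zero (n : ℕ) : dyadicApprox 0 n = 0 := by
  simp [dyadicApprox, dyadicCeil, dyadic]

section Paths

variable {E : Type*} [PseudoMetricSpace E]

def DyadicIncrementBound (f : ℝ≥0 → E) (N n : ℕ) : Prop :=
  ∀ k, k + 1 ≤ N * 2 ^ n → dist (f (dyadic (k + 1) n)) (f (dyadic k n)) ≤ (7 / 8) ^ n

def goodPaths : Set (ℝ≥0 → E) := {f | ∀ N : ℕ, ∀ᶠ n in atTop, DyadicIncrementBound f N n}

lemma dist_dyadicApprox_succ_le {f : ℝ≥0 → E} {N n : ℕ} (hf : DyadicIncrementBound f N (n + 1))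
    {t : ℝ≥0} (ht : t ≤ N) :
    dist (f (dyadicApprox t n)) (f (dyadicApprox t (n + 1))) ≤ 7 / 8 * (7 / 8) ^ n := by
  rw [← pow_succ']
  have hcoarse : dyadicApprox t n = dyadic (2 * dyadicCeil t n) (n + 1) :=
    (dyadic_two_mul _ _).symm
  rcases dyadicCeil_succ t n with h | h
  · rw [hcoarse, dyadicApprox, h, dist_self]
    positivity
  · rw [hcoarse, ← h]
    refine hf _ ?_
    rw [h, pow_succ, ← mul_assoc, mul_comm 2]
    exact Nat.mul_le_mul_right 2 (dyadicCeil_le ht n)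

lemma dist_dyadicApprox_le_of_dist_le {f : ℝ≥0 → E} {N n : ℕ} (hf : DyadicIncrementBound f N n)
    {s t : ℝ≥0} (hs : s ≤ N) (ht : t ≤ N) (hst : dist s t ≤ (2 ^ n)⁻¹) :
    dist (f (dyadicApprox s n)) (f (dyadicApprox t n)) ≤ (7 / 8) ^ n := by
  rw [NNReal.dist_eq, abs_sub_le_iff] at hst
  have h₁ := dyadicCeil_le_add_one (n := n) (s := s) (t := t) (by
    rw [← NNReal.coe_le_coe]; push_cast; linarith [hst.1])
  have h₂ := dyadicCeil_le_add_one (n := n) (s := t) (t := s) (by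
    rw [← NNReal.coe_le_coe]; push_cast; linarith [hst.2])
  obtain h | h | h : dyadicCeil s n = dyadicCeil t n ∨ dyadicCeil s n = dyadicCeil t n + 1 ∨
      dyadicCeil t n = dyadicCeil s n + 1 := by omega
  · rw [dyadicApprox, dyadicApprox, h, dist_self]
    positivity
  · rw [dyadicApprox, dyadicApprox, h]
    exact hf _ (h ▸ dyadicCeil_le hs n)
  · rw [dist_comm, dyadicApprox, dyadicApprox, h]
    exact hf _ (h ▸ dyadicCeil_le ht n)

variable [Nonempty E]

def dyadicLimit (f : ℝ≥0 → E) (t : ℝ≥0) : E := limUnder atTop fun n => f (dyadicApprox t n)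

lemma dyadicLimit_zero [T2Space E] (f : ℝ≥0 → E) : dyadicLimit f 0 = f 0 := by
  simp only [dyadicLimit, dyadicApprox_zero]
  exact tendsto_const_nhds.limUnder_eq

variable [CompleteSpace E] {f : ℝ≥0 → E}

lemma tendsto_dyadicLimit (hf : f ∈ goodPaths) (t : ℝ≥0) :
    Tendsto (fun n => f (dyadicApprox t n)) atTop (𝓝 (dyadicLimit f t)) := by
  obtain ⟨m, hm⟩ := eventually_atTop.1 (hf ⌈t⌉₊)
  exact tendsto_nhds_limUnder (exists_tendsto_of_dist_le_geometric_of_ge (m := m) (by norm_num)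
    fun n hn => dist_dyadicApprox_succ_le (hm (n + 1) (by omega)) (Nat.le_ceil t))

lemma dist_dyadicLimit_le (hf : f ∈ goodPaths) {N m : ℕ}
    (hm : ∀ n ≥ m, DyadicIncrementBound f N n) {t : ℝ≥0} (ht : t ≤ N) {n : ℕ} (hn : m ≤ n) :
    dist (f (dyadicApprox t n)) (dyadicLimit f t) ≤ 7 * (7 / 8) ^ n := by
  have := dist_le_of_le_geometric_of_tendsto_of_ge (by norm_num)
    (fun k hk => dist_dyadicApprox_succ_le (hm (k + 1) (by omega)) ht)
    (tendsto_dyadicLimit hf t) hn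
  convert this using 1
  ring

lemma continuous_dyadicLimit (hf : f ∈ goodPaths) : Continuous (dyadicLimit f) := by
  rw [Metric.continuous_iff]
  intro t ε hε
  obtain ⟨m, hm⟩ := eventually_atTop.1 (hf (⌈t⌉₊ + 1))
  have hsmall : Tendsto (fun n : ℕ => 15 * (7 / 8 : ℝ) ^ n) atTop (𝓝 0) := by
    simpa using (tendsto_pow_atTop_nhds_zero_of_lt_one (by norm_num : (0 : ℝ) ≤ 7 / 8)
      (by norm_num)).const_mul 15
  obtain ⟨n, hnm, hnε⟩ := ((eventually_ge_atTop m).and (hsmall.eventually (gt_mem_nhds hε))).exists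
  refine ⟨(2 ^ n)⁻¹, by positivity, fun s hs => ?_⟩
  have ht : t ≤ ⌈t⌉₊ + 1 := (Nat.le_ceil t).trans (le_add_of_nonneg_right zero_le_one)
  have hs' : s ≤ ⌈t⌉₊ + 1 := by
    have h₁ : ((2 : ℝ) ^ n)⁻¹ ≤ 1 := inv_le_one_of_one_le₀ (one_le_pow₀ one_le_two)
    have h₂ : (t : ℝ) ≤ ⌈t⌉₊ := by exact_mod_cast Nat.le_ceil t
    rw [NNReal.dist_eq, abs_sub_lt_iff] at hs
    rw [← NNReal.coe_le_coe]
    push_cast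
    linarith
  calc dist (dyadicLimit f s) (dyadicLimit f t)
      ≤ dist (dyadicLimit f s) (f (dyadicApprox s n)) +
          dist (f (dyadicApprox s n)) (f (dyadicApprox t n)) +
          dist (f (dyadicApprox t n)) (dyadicLimit f t) := dist_triangle4 _ _ _ _
    _ ≤ 7 * (7 / 8) ^ n + (7 / 8) ^ n + 7 * (7 / 8) ^ n := by
      gcongr
      · rw [dist_comm]; exact dist_dyadicLimit_le hf hm (by exact_mod_cast hs') hnm
      · exact dist_dyadicApprox_le_of_dist_le (hm n hnm) (by exact_mod_cast hs')
          (by exact_mod_cast ht) hs.le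
      · exact dist_dyadicLimit_le hf hm (by exact_mod_cast ht) hnm
    _ < ε := by linarith

end Paths

section Measurable

variable {E : Type*} [PseudoMetricSpace E] [MeasurableSpace E] [OpensMeasurableSpace E]
  [SecondCountableTopology E]

lemma measurableSet_goodPaths : MeasurableSet (goodPaths : Set (ℝ≥0 → E)) := by
  simp only [goodPaths, DyadicIncrementBound, eventually_atTop, Set.ofPred_forall,
    Set.ofPred_exists]
  measurability

def HasFourthMomentBound (μ : Measure (ℝ≥0 → E)) (C : ℝ) : Prop :=
  ∀ s t : ℝ≥0, ∫⁻ f, ENNReal.ofReal (dist (f t) (f s) ^ 4) ∂μ ≤ ENNReal.ofReal (C * dist t s ^ 2)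

lemma measure_le_dist_le {μ : Measure (ℝ≥0 → E)} {C : ℝ} (hμ : HasFourthMomentBound μ C)
    {s t : ℝ≥0} {n : ℕ} (hst : dist t s ≤ (2 ^ n)⁻¹) :
    μ {f | (7 / 8) ^ n ≤ dist (f t) (f s)} ≤ ENNReal.ofReal (C * (1024 / 2401) ^ n) := by
  have hδ : (0 : ℝ) < ((7 / 8) ^ n) ^ 4 := by positivity
  calc μ {f | (7 / 8) ^ n ≤ dist (f t) (f s)}
      ≤ μ {f | ENNReal.ofReal (((7 / 8) ^ n) ^ 4) ≤ ENNReal.ofReal (dist (f t) (f s) ^ 4)} :=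
        measure_mono fun f hf => ENNReal.ofReal_le_ofReal (pow_le_pow_left₀ (by positivity) hf 4)
    _ ≤ (∫⁻ f, ENNReal.ofReal (dist (f t) (f s) ^ 4) ∂μ) / ENNReal.ofReal (((7 / 8) ^ n) ^ 4) :=
        meas_ge_le_lintegral_div (by fun_prop) (ENNReal.ofReal_pos.2 hδ).ne' ENNReal.ofReal_ne_top
    _ ≤ ENNReal.ofReal (C * dist t s ^ 2) / ENNReal.ofReal (((7 / 8) ^ n) ^ 4) := by
        gcongr; exact hμ s t
    _ ≤ ENNReal.ofReal (C * (1024 / 2401) ^ n) := by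
        rw [← ENNReal.ofReal_div_of_pos hδ, ENNReal.ofReal_le_ofReal_iff']
        rcases le_or_gt 0 C with hC | hC
        · left
          rw [div_le_iff₀ hδ]
          calc C * dist t s ^ 2 ≤ C * ((2 ^ n)⁻¹) ^ 2 := by gcongr
            _ = C * (1024 / 2401) ^ n * ((7 / 8) ^ n) ^ 4 := by
              rw [← inv_pow, ← pow_mul, ← pow_mul, mul_comm n, mul_comm n, pow_mul, pow_mul,
                mul_assoc, ← mul_pow]
              norm_num
        · exact Or.inr (div_nonpos_of_nonpos_of_nonneg
            (mul_nonpos_of_nonpos_of_nonneg hC.le (by positivity)) hδ.le)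

variable {μ : Measure (ℝ≥0 → E)} {C : ℝ}

lemma measure_not_dyadicIncrementBound_le (hμ : HasFourthMomentBound μ C) (N n : ℕ) :
    μ {f | ¬DyadicIncrementBound f N n} ≤ ENNReal.ofReal (N * C * (2048 / 2401) ^ n) := by
  have hcover : {f | ¬DyadicIncrementBound f N n} ⊆ ⋃ k ∈ Finset.range (N * 2 ^ n),
      {f : ℝ≥0 → E | (7 / 8) ^ n ≤ dist (f (dyadic (k + 1) n)) (f (dyadic k n))} := by
    intro f hf
    simp only [DyadicIncrementBound, Set.mem_ofPred_eq, not_forall, not_le] at hf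
    obtain ⟨k, hk, hlt⟩ := hf
    exact Set.mem_biUnion (Finset.mem_range.2 hk) hlt.le
  calc μ {f | ¬DyadicIncrementBound f N n}
      ≤ ∑ k ∈ Finset.range (N * 2 ^ n), ENNReal.ofReal (C * (1024 / 2401) ^ n) :=
        (measure_mono hcover).trans <| (measure_biUnion_finset_le _ _).trans <|
          Finset.sum_le_sum fun k _ => measure_le_dist_le hμ (dist_dyadic_succ k n).le
    _ = ENNReal.ofReal (N * C * (2048 / 2401) ^ n) := by
        rw [Finset.sum_const, Finset.card_range, nsmul_eq_mul, ← ENNReal.ofReal_natCast,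
          ← ENNReal.ofReal_mul (Nat.cast_nonneg _)]
        congr 1
        push_cast
        rw [show (2048 / 2401 : ℝ) = 2 * (1024 / 2401) by norm_num, mul_pow]
        ring

lemma ae_mem_goodPaths (hμ : HasFourthMomentBound μ C) : ∀ᵐ f ∂μ, f ∈ goodPaths := by
  refine ae_all_iff.2 fun N => ?_
  filter_upwards [ae_eventually_notMem_of_le_geometric (by norm_num) (by norm_num)
    (measure_not_dyadicIncrementBound_le hμ N)] with f hf
  simpa using hf

lemma ae_tendsto_dyadicApprox (hμ : HasFourthMomentBound μ C) (t : ℝ≥0) :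
    ∀ᵐ f ∂μ, Tendsto (fun n => f (dyadicApprox t n)) atTop (𝓝 (f t)) := by
  filter_upwards [ae_eventually_notMem_of_le_geometric (by norm_num) (by norm_num)
    fun n => measure_le_dist_le hμ (dist_dyadicApprox_le t n)] with f hf
  refine tendsto_iff_dist_tendsto_zero.2 (squeeze_zero' (Eventually.of_forall fun n => dist_nonneg)
    (hf.mono fun n hn => (not_le.1 hn).le)
    (tendsto_pow_atTop_nhds_zero_of_lt_one (by norm_num) (by norm_num : (7 / 8 : ℝ) < 1)))

end Measurable

section Modification

variable {F : Type*} [NormedAddCommGroup F]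

def dyadicModification (t : ℝ≥0) (f : ℝ≥0 → F) : F :=
  goodPaths.indicator (fun g => dyadicLimit g t - g 0) f

lemma dyadicModification_zero (f : ℝ≥0 → F) : dyadicModification 0 f = 0 := by
  simp [dyadicModification, dyadicLimit_zero]

variable [CompleteSpace F]

lemma continuous_dyadicModification (f : ℝ≥0 → F) :
    Continuous fun t => dyadicModification t f := by
  by_cases hf : f ∈ goodPaths
  · simp only [dyadicModification, Set.indicator_of_mem hf]
    exact (continuous_dyadicLimit hf).sub continuous_const
  · simpa only [dyadicModification, Set.indicator_of_notMem hf] using continuous_const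

lemma tendsto_dyadicModification (t : ℝ≥0) (f : ℝ≥0 → F) :
    Tendsto (fun n => goodPaths.indicator (fun g => g (dyadicApprox t n) - g 0) f) atTop
      (𝓝 (dyadicModification t f)) := by
  by_cases hf : f ∈ goodPaths
  · simpa only [dyadicModification, Set.indicator_of_mem hf] using
      (tendsto_dyadicLimit hf t).sub_const (f 0)
  · simpa only [dyadicModification, Set.indicator_of_notMem hf] using tendsto_const_nhds

lemma measurable_dyadicModification [MeasurableSpace F] [BorelSpace F] [SecondCountableTopology F]
    (t : ℝ≥0) : Measurable (dyadicModification t : (ℝ≥0 → F) → F) :=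
  measurable_of_tendsto_metrizable
    (f := fun n => goodPaths.indicator fun g : ℝ≥0 → F => g (dyadicApprox t n) - g 0)
    (fun n => ((measurable_pi_apply (dyadicApprox t n)).sub (measurable_pi_apply 0)).indicator
      measurableSet_goodPaths)
    (tendsto_pi_nhds.2 (tendsto_dyadicModification t))

end Modification

end DyadicModification

theorem stmt6_general {d : ℕ}
    (Q : Set (Measure (OmegaBar d)))
    (hprob : ∀ q ∈ Q, IsProbabilityMeasure q)
    (hzero : ∀ q ∈ Q, q {ω : OmegaBar d | ω 0 = 0} = 1)
    (C : ℝ)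
    (hmom : ∀ q ∈ Q, ∀ s t : ℝ≥0,
      ∫⁻ ω : OmegaBar d, ENNReal.ofReal (‖ω t - ω s‖ ^ 4) ∂q ≤
        ENNReal.ofReal (C * |(t : ℝ) - (s : ℝ)| ^ 2)) :
    ∃ B : ℝ≥0 → OmegaBar d → EuclideanSpace ℝ (Fin d),
      (∀ ω : OmegaBar d, Continuous (fun t => B t ω) ∧ B 0 ω = 0) ∧
      (∀ t : ℝ≥0, Measurable (B t)) ∧
      (∀ t : ℝ≥0, ∀ q ∈ Q, q {ω : OmegaBar d | B t ω ≠ ω t} = 0) := by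
  open DyadicModification in
  refine ⟨dyadicModification, fun ω => ⟨continuous_dyadicModification ω, dyadicModification_zero ω⟩,
    measurable_dyadicModification, fun t q hq => ae_iff.1 ?_⟩
  have := hprob q hq
  have hμ : HasFourthMomentBound q C := fun s t => by
    simpa only [dist_eq_norm, NNReal.dist_eq] using hmom q hq s t
  have hstart : ∀ᵐ ω ∂q, ω 0 = 0 := by
    rw [ae_iff_measure_eq (measurableSet_eq_fun (measurable_pi_apply 0)
      measurable_const).nullMeasurableSet, hzero q hq, measure_univ]
  filter_upwards [ae_mem_goodPaths hμ, ae_tendsto_dyadicApprox hμ t, hstart] with ω hgood hlim h0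
  rw [dyadicModification, Set.indicator_of_mem hgood, h0, sub_zero]
  exact tendsto_nhds_unique (tendsto_dyadicLimit hgood t) hlim

/-- Lemma 6 of the paper: if every `Q` in a nonempty family `𝒬` of probability measures on
`Ω̄` charges `{ω̄(0) = 0}` with full mass and the fourth moments of increments are uniformly
bounded by `C·|t−s|²`, then the canonical process admits a modification `B̃` with everywhere
continuous paths starting from `0`, such that `sup_{Q∈𝒬} Q(B̃_t ≠ ω̄(t)) = 0` for all `t`. -/
theorem stmt6 {d : ℕ} (hd : 1 ≤ d)
    (Q : Set (Measure (OmegaBar d))) (hne : Q.Nonempty)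
    (hprob : ∀ q ∈ Q, IsProbabilityMeasure q)
    (hzero : ∀ q ∈ Q, q {ω : OmegaBar d | ω 0 = 0} = 1)
    (C : ℝ)
    (hmom : ∀ q ∈ Q, ∀ s t : ℝ≥0,
      ∫⁻ ω : OmegaBar d, ENNReal.ofReal (‖ω t - ω s‖ ^ 4) ∂q ≤
        ENNReal.ofReal (C * |(t : ℝ) - (s : ℝ)| ^ 2)) :
    ∃ B : ℝ≥0 → OmegaBar d → EuclideanSpace ℝ (Fin d),
      (∀ ω : OmegaBar d, Continuous (fun t => B t ω) ∧ B 0 ω = 0) ∧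
      (∀ t : ℝ≥0, Measurable (B t)) ∧
      (∀ t : ℝ≥0, ∀ q ∈ Q, q {ω : OmegaBar d | B t ω ≠ ω t} = 0) :=
  stmt6_general Q hprob hzero C hmom
end
end

section
/- Let 𝒫 be a nonempty family of Borel probability measures on Ω = C₀^d(ℝ⁺) and define the upper expectation Ê[X] := sup_{P∈𝒫} ∫ X dP for nonnegative Borel measurable X. Fix p ≥ 1. If (X_n)_{n≥1} is a sequence of Borel measurable real-valued functions on Ω with Ê[|X_n|^p] < ∞ for every n and Ê[|X_n − X_m|^p] → 0 as n, m → ∞, then there exists a Borel measurable X : Ω → ℝ with Ê[|X|^p] < ∞ and Ê[|X_n − X|^p] → 0 as n → ∞. -/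
/-
The quantity `Ê[|X|^p]^{1/p}` is the supremum over `P ∈ 𝒫` of the `Lᵖ(P)` seminorms. Choose a
subsequence whose tail differences are below `2⁻ᵏ` uniformly over `𝒫`. For each single `P` the
usual Riesz–Fischer argument makes it converge `P`-a.e., so its pointwise `limUnder` is one
measurable function that is the a.e. limit under every `P ∈ 𝒫` at once. Fatou's lemma for the
`Lᵖ` seminorm, applied under each `P`, then bounds `Ê[|X_n - Y|^p]` by the Cauchy modulus.
-/

open MeasureTheory Filter Topology
open scoped NNReal ENNReal

noncomputable section

/-- The space `Ω = C₀^d(ℝ⁺)` of continuous paths `ω : [0,∞) → ℝ^d` with `ω 0 = 0`,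
with the topology of uniform convergence on compacts (induced by the metric `ρ`). -/
def OmegaC (d : ℕ) : Type := {ω : C(ℝ≥0, EuclideanSpace ℝ (Fin d)) // ω 0 = 0}

instance (d : ℕ) : TopologicalSpace (OmegaC d) := instTopologicalSpaceSubtype
instance (d : ℕ) : MeasurableSpace (OmegaC d) := borel _
instance (d : ℕ) : BorelSpace (OmegaC d) := ⟨rfl⟩

/-- The upper expectation `Ê[Y] = sup_{P∈𝒫} ∫ Y dP ∈ [0,∞]` of a nonnegative function,
where `Y` is given as the function `ω ↦ |f ω|^p`. -/
def upperExp {d : ℕ} (P : Set (Measure (OmegaC d))) (Y : OmegaC d → ℝ) : ℝ≥0∞ :=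
  ⨆ p ∈ P, ∫⁻ ω, ENNReal.ofReal (Y ω) ∂p

lemma ENNReal.tendsto_rpow_nhds_zero_iff {ι : Type*} {l : Filter ι} {f : ι → ℝ≥0∞} {p : ℝ}
    (hp : 0 < p) : Tendsto (fun i => f i ^ p) l (𝓝 0) ↔ Tendsto f l (𝓝 0) := by
  have h := (ENNReal.orderIsoRpow p hp).toHomeomorph.isInducing.tendsto_nhds_iff
    (f := f) (l := l) (y := 0)
  simpa [Function.comp_def, ENNReal.zero_rpow_of_pos hp] using h.symm

lemma exists_strictMono_lt_of_tendsto_prod_zero {u : ℕ × ℕ → ℝ≥0∞}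
    (hu : Tendsto u atTop (𝓝 0)) {B : ℕ → ℝ≥0∞} (hB : ∀ k, 0 < B k) :
    ∃ φ : ℕ → ℕ, StrictMono φ ∧ ∀ k n m, φ k ≤ n → φ k ≤ m → u (n, m) < B k := by
  refine extraction_forall_of_eventually
    (P := fun k N => ∀ n m, N ≤ n → N ≤ m → u (n, m) < B k) fun k => ?_
  obtain ⟨N, hN⟩ := eventually_atTop_prod_self.1 (hu.eventually (gt_mem_nhds (hB k)))
  filter_upwards [eventually_ge_atTop N] with M hM n m hn hm
  exact hN n m (hM.trans hn) (hM.trans hm)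

section UpperLpNorm

variable {α E : Type*} [MeasurableSpace α] [NormedAddCommGroup E]

def upperLpNorm (P : Set (Measure α)) (p : ℝ≥0∞) (f : α → E) : ℝ≥0∞ :=
  ⨆ μ ∈ P, eLpNorm f p μ

variable {P : Set (Measure α)} {p : ℝ≥0∞}

lemma eLpNorm_le_upperLpNorm {μ : Measure α} (hμ : μ ∈ P) (f : α → E) :
    eLpNorm f p μ ≤ upperLpNorm P p f :=
  le_iSup₂ (f := fun μ _ => eLpNorm f p μ) μ hμ

lemma upperLpNorm_sub_le (hp : 1 ≤ p) {f g : α → E} (hf : StronglyMeasurable f)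
    (hg : StronglyMeasurable g) :
    upperLpNorm P p (f - g) ≤ upperLpNorm P p f + upperLpNorm P p g :=
  iSup₂_le fun _ hμ => (eLpNorm_sub_le hf.aestronglyMeasurable hg.aestronglyMeasurable hp).trans
    (add_le_add (eLpNorm_le_upperLpNorm hμ f) (eLpNorm_le_upperLpNorm hμ g))

lemma upperLpNorm_lt_top_of_tendsto (hp : 1 ≤ p) {X : ℕ → α → E} {Y : α → E}
    (hX : ∀ n, StronglyMeasurable (X n)) (hY : StronglyMeasurable Y)
    (hfin : ∀ n, upperLpNorm P p (X n) < ∞)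
    (hlim : Tendsto (fun n => upperLpNorm P p (X n - Y)) atTop (𝓝 0)) :
    upperLpNorm P p Y < ∞ := by
  obtain ⟨n, hn⟩ := (hlim.eventually (gt_mem_nhds zero_lt_one)).exists
  calc upperLpNorm P p Y = upperLpNorm P p (X n - (X n - Y)) := by rw [sub_sub_cancel]
    _ ≤ upperLpNorm P p (X n) + upperLpNorm P p (X n - Y) :=
        upperLpNorm_sub_le hp (hX n) ((hX n).sub hY)
    _ < ∞ := ENNReal.add_lt_top.2 ⟨hfin n, hn.trans ENNReal.one_lt_top⟩

theorem exists_stronglyMeasurable_tendsto_upperLpNorm [CompleteSpace E] (hp : 1 ≤ p)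
    {X : ℕ → α → E} (hX : ∀ n, StronglyMeasurable (X n))
    (hcauchy : Tendsto (fun nm : ℕ × ℕ => upperLpNorm P p (X nm.1 - X nm.2)) atTop (𝓝 0)) :
    ∃ Y : α → E, StronglyMeasurable Y ∧
      Tendsto (fun n => upperLpNorm P p (X n - Y)) atTop (𝓝 0) := by
  obtain ⟨φ, hφ, hφ_cauchy⟩ := exists_strictMono_lt_of_tendsto_prod_zero hcauchy
    (B := fun k => 2⁻¹ ^ k) fun k => ENNReal.pow_pos (by simp) k
  set Y : α → E := fun x => limUnder atTop fun k => X (φ k) x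
  have hY_ae : ∀ μ ∈ P, ∀ᵐ x ∂μ, Tendsto (fun k => X (φ k) x) atTop (𝓝 (Y x)) := by
    intro μ hμ
    filter_upwards [Lp.ae_tendsto_of_cauchy_eLpNorm (fun k => (hX (φ k)).aestronglyMeasurable) hp
      (by simp) fun N n m hn hm => (eLpNorm_le_upperLpNorm hμ _).trans_lt
        (hφ_cauchy N _ _ (hφ.monotone hn) (hφ.monotone hm))] with x hx
    exact tendsto_nhds_limUnder hx
  refine ⟨Y, StronglyMeasurable.limUnder fun k => hX (φ k),
    ENNReal.tendsto_atTop_zero.2 fun ε hε => ?_⟩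
  obtain ⟨M, hM⟩ := eventually_atTop_prod_self.1 (hcauchy.eventually (Iic_mem_nhds hε))
  refine ⟨M, fun n hn => iSup₂_le fun μ hμ => ?_⟩
  calc eLpNorm (X n - Y) p μ ≤ liminf (fun k => eLpNorm (X n - X (φ k)) p μ) atTop :=
        Lp.eLpNorm_lim_le_liminf_eLpNorm (fun k => ((hX n).sub (hX (φ k))).aestronglyMeasurable)
          _ (by filter_upwards [hY_ae μ hμ] with x hx using tendsto_const_nhds.sub hx)
    _ ≤ ε := by
        refine liminf_le_of_frequently_le' (Eventually.frequently ?_)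
        filter_upwards [eventually_ge_atTop M] with k hk
        exact (eLpNorm_le_upperLpNorm hμ _).trans (hM n _ hn (hk.trans (hφ.id_le k)))

end UpperLpNorm

lemma upperExp_abs_rpow_eq {d : ℕ} (P : Set (Measure (OmegaC d))) (f : OmegaC d → ℝ) {p : ℝ}
    (hp : 0 < p) :
    upperExp P (fun ω => |f ω| ^ p) = upperLpNorm P (ENNReal.ofReal p) f ^ p := by
  simp only [upperExp, upperLpNorm, ← ENNReal.orderIsoRpow_apply p hp, OrderIso.map_iSup₂]
  refine iSup_congr fun μ => iSup_congr fun _ => ?_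
  rw [ENNReal.orderIsoRpow_apply, eLpNorm_eq_lintegral_rpow_enorm_toReal (by simpa using hp)
    ENNReal.ofReal_ne_top, ENNReal.toReal_ofReal hp.le, ← ENNReal.rpow_mul,
    one_div_mul_cancel hp.ne', ENNReal.rpow_one]
  refine lintegral_congr fun ω => ?_
  rw [Real.enorm_eq_ofReal_abs, ENNReal.ofReal_rpow_of_nonneg (abs_nonneg _) hp.le]

theorem stmt9_general {d : ℕ}
    (P : Set (Measure (OmegaC d)))
    (p : ℝ) (hp : 1 ≤ p)
    (X : ℕ → OmegaC d → ℝ)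
    (hmeas : ∀ n, Measurable (X n))
    (hfin : ∀ n, upperExp P (fun ω => |X n ω| ^ p) < ∞)
    (hcauchy : Tendsto (fun nm : ℕ × ℕ =>
        upperExp P (fun ω => |X nm.1 ω - X nm.2 ω| ^ p)) atTop (𝓝 0)) :
    ∃ Y : OmegaC d → ℝ, Measurable Y ∧ upperExp P (fun ω => |Y ω| ^ p) < ∞ ∧
      Tendsto (fun n => upperExp P (fun ω => |X n ω - Y ω| ^ p)) atTop (𝓝 0) := by
  have hp0 : 0 < p := zero_lt_one.trans_le hp
  have hq : 1 ≤ ENNReal.ofReal p := by simpa using ENNReal.ofReal_le_ofReal hp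
  have hX n : StronglyMeasurable (X n) := (hmeas n).stronglyMeasurable
  simp only [fun f => upperExp_abs_rpow_eq P f hp0, ENNReal.rpow_lt_top_iff_of_pos hp0,
    ENNReal.tendsto_rpow_nhds_zero_iff hp0] at hfin hcauchy ⊢
  obtain ⟨Y, hY, hlim⟩ := exists_stronglyMeasurable_tendsto_upperLpNorm hq hX hcauchy
  exact ⟨Y, hY.measurable, upperLpNorm_lt_top_of_tendsto hq hX hY hfin hlim, hlim⟩

/-- Proposition 9(1) of the paper (completeness of `𝕃^p`, `p ≥ 1`): every Cauchy sequence
for `X ↦ Ê[|X|^p]^{1/p}` of Borel functions with `Ê[|X_n|^p] < ∞` converges to some Borel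
function `X` with `Ê[|X|^p] < ∞`. -/
theorem stmt9 {d : ℕ} (hd : 1 ≤ d)
    (P : Set (Measure (OmegaC d))) (hne : P.Nonempty)
    (hprob : ∀ p ∈ P, IsProbabilityMeasure p)
    (p : ℝ) (hp : 1 ≤ p)
    (X : ℕ → OmegaC d → ℝ)
    (hmeas : ∀ n, Measurable (X n))
    (hfin : ∀ n, upperExp P (fun ω => |X n ω| ^ p) < ∞)
    (hcauchy : Tendsto (fun nm : ℕ × ℕ =>
        upperExp P (fun ω => |X nm.1 ω - X nm.2 ω| ^ p)) atTop (𝓝 0)) :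
    ∃ Y : OmegaC d → ℝ, Measurable Y ∧ upperExp P (fun ω => |Y ω| ^ p) < ∞ ∧
      Tendsto (fun n => upperExp P (fun ω => |X n ω - Y ω| ^ p)) atTop (𝓝 0) :=
  stmt9_general P p hp X hmeas hfin hcauchy
end
end

section
/- Let 𝒫 be a nonempty family of Borel probability measures on Ω = C₀^d(ℝ⁺) and define the upper expectation Ê[X] := sup_{P∈𝒫} ∫ X dP for nonnegative Borel measurable X. Fix 0 < p < 1. If (X_n)_{n≥1} is a sequence of Borel measurable real-valued functions on Ω with Ê[|X_n|^p] < ∞ for every n and Ê[|X_n − X_m|^p] → 0 as n, m → ∞, then there exists a Borel measurable X : Ω → ℝ with Ê[|X|^p] < ∞ and Ê[|X_n − X|^p] → 0 as n → ∞. -/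
open MeasureTheory Filter Topology
open scoped NNReal ENNReal

noncomputable section

/-- Subadditivity of `rpow` on nonnegative reals for exponents in `[0,1]`. -/
lemma aux_rpow_add_le {x y q : ℝ} (hx : 0 ≤ x) (hy : 0 ≤ y) (hq0 : 0 ≤ q) (hq1 : q ≤ 1) :
    (x + y) ^ q ≤ x ^ q + y ^ q := by
  have h := NNReal.rpow_add_le_add_rpow x.toNNReal y.toNNReal hq0 hq1
  have h2 := NNReal.coe_le_coe.2 h
  rw [NNReal.coe_rpow, NNReal.coe_add, NNReal.coe_add, NNReal.coe_rpow, NNReal.coe_rpow,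
    Real.coe_toNNReal _ hx, Real.coe_toNNReal _ hy] at h2
  exact h2

/-- Triangle-type inequality for `|·|^q`, `0 ≤ q ≤ 1`. -/
lemma aux_abs_rpow_tri {q : ℝ} (hq0 : 0 ≤ q) (hq1 : q ≤ 1) (a b c : ℝ) :
    |a - c| ^ q ≤ |a - b| ^ q + |b - c| ^ q := by
  calc |a - c| ^ q ≤ (|a - b| + |b - c|) ^ q :=
        Real.rpow_le_rpow (abs_nonneg _) (abs_sub_le a b c) hq0
    _ ≤ _ := aux_rpow_add_le (abs_nonneg _) (abs_nonneg _) hq0 hq1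

lemma aux_ofReal_tri {q : ℝ} (hq0 : 0 ≤ q) (hq1 : q ≤ 1) (a b c : ℝ) :
    ENNReal.ofReal (|a - c| ^ q) ≤
      ENNReal.ofReal (|a - b| ^ q) + ENNReal.ofReal (|b - c| ^ q) := by
  rw [← ENNReal.ofReal_add (Real.rpow_nonneg (abs_nonneg _) _)
    (Real.rpow_nonneg (abs_nonneg _) _)]
  exact ENNReal.ofReal_le_ofReal (aux_abs_rpow_tri hq0 hq1 a b c)

lemma aux_lintegral_le {d : ℕ} {P : Set (Measure (OmegaC d))} {μ : Measure (OmegaC d)}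
    (hμ : μ ∈ P) (f : OmegaC d → ℝ) :
    ∫⁻ ω, ENNReal.ofReal (f ω) ∂μ ≤ upperExp P f :=
  le_iSup₂ (f := fun (ν : Measure (OmegaC d)) (_ : ν ∈ P) =>
    ∫⁻ ω, ENNReal.ofReal (f ω) ∂ν) μ hμ

lemma aux_upperExp_le_add {d : ℕ} {P : Set (Measure (OmegaC d))} {f g h : OmegaC d → ℝ}
    (hg : Measurable g)
    (hfg : ∀ ω, ENNReal.ofReal (f ω) ≤ ENNReal.ofReal (g ω) + ENNReal.ofReal (h ω)) :
    upperExp P f ≤ upperExp P g + upperExp P h := by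
  refine iSup₂_le fun μ hμ => ?_
  calc ∫⁻ ω, ENNReal.ofReal (f ω) ∂μ
      ≤ ∫⁻ ω, (ENNReal.ofReal (g ω) + ENNReal.ofReal (h ω)) ∂μ := lintegral_mono hfg
    _ = ∫⁻ ω, ENNReal.ofReal (g ω) ∂μ + ∫⁻ ω, ENNReal.ofReal (h ω) ∂μ :=
        lintegral_add_left (hg.ennreal_ofReal) _
    _ ≤ upperExp P g + upperExp P h :=
        add_le_add (aux_lintegral_le hμ g) (aux_lintegral_le hμ h)

/-- Proposition 9(2) of the paper (completeness of `𝕃^p`, `0 < p < 1`): every Cauchy sequence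
for `X ↦ Ê[|X|^p]^{1/p}` of Borel functions with `Ê[|X_n|^p] < ∞` converges to some Borel
function `X` with `Ê[|X|^p] < ∞`. -/
theorem stmt10 {d : ℕ} (hd : 1 ≤ d)
    (P : Set (Measure (OmegaC d))) (hne : P.Nonempty)
    (hprob : ∀ p ∈ P, IsProbabilityMeasure p)
    (p : ℝ) (hp0 : 0 < p) (hp1 : p < 1)
    (X : ℕ → OmegaC d → ℝ)
    (hmeas : ∀ n, Measurable (X n))
    (hfin : ∀ n, upperExp P (fun ω => |X n ω| ^ p) < ∞)
    (hcauchy : Tendsto (fun nm : ℕ × ℕ =>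
        upperExp P (fun ω => |X nm.1 ω - X nm.2 ω| ^ p)) atTop (𝓝 0)) :
    ∃ Y : OmegaC d → ℝ, Measurable Y ∧ upperExp P (fun ω => |Y ω| ^ p) < ∞ ∧
      Tendsto (fun n => upperExp P (fun ω => |X n ω - Y ω| ^ p)) atTop (𝓝 0) := by
  have hp0' : (0:ℝ) ≤ p := hp0.le
  have hp1' : p ≤ 1 := hp1.le
  -- measurability of the integrands
  have measE : ∀ (f g : OmegaC d → ℝ), Measurable f → Measurable g →
      Measurable (fun ω => ENNReal.ofReal (|f ω - g ω| ^ p)) := fun f g hf hg =>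
    Measurable.ennreal_ofReal ((hf.sub hg).abs.pow measurable_const)
  -- Cauchy extraction: choose N k such that all upper expectations beyond N k are ≤ 2⁻¹^k
  have hC : ∀ k : ℕ, ∃ N : ℕ, ∀ n m : ℕ, N ≤ n → N ≤ m →
      upperExp P (fun ω => |X n ω - X m ω| ^ p) ≤ (2 : ℝ≥0∞)⁻¹ ^ k := by
    intro k
    have hpos : (0:ℝ≥0∞) < 2⁻¹ ^ k := ENNReal.pow_pos (by norm_num) k
    obtain ⟨N, hN⟩ := ENNReal.tendsto_atTop_zero.mp hcauchy _ hpos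
    exact ⟨max N.1 N.2, fun n m hn hm =>
      hN (n, m) ⟨le_trans (le_max_left _ _) hn, le_trans (le_max_right _ _) hm⟩⟩
  choose N hN using hC
  -- strictly increasing subsequence
  let φ : ℕ → ℕ := fun k => Nat.rec (N 0) (fun k ih => max (ih + 1) (N (k + 1))) k
  have hφsucc : ∀ k, φ k < φ (k + 1) := fun k =>
    lt_of_lt_of_le (Nat.lt_succ_self _) (le_max_left _ _)
  have hφmono : Monotone φ := monotone_nat_of_le_succ fun k => (hφsucc k).le
  have hφN : ∀ k, N k ≤ φ k := by
    intro k
    cases k with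
    | zero => exact le_rfl
    | succ k => exact le_max_right _ _
  have hbound : ∀ k n m, φ k ≤ n → φ k ≤ m →
      upperExp P (fun ω => |X n ω - X m ω| ^ p) ≤ (2 : ℝ≥0∞)⁻¹ ^ k := fun k n m hn hm =>
    hN k n m (le_trans (hφN k) hn) (le_trans (hφN k) hm)
  set Y : OmegaC d → ℝ := fun ω => liminf (fun k => X (φ k) ω) atTop with hY
  have hYmeas : Measurable Y := Measurable.liminf fun k => hmeas (φ k)
  -- a.e. convergence of X (φ k) to Y under every μ ∈ P
  have hae : ∀ μ ∈ P, ∀ᵐ ω ∂μ, Tendsto (fun k => X (φ k) ω) atTop (𝓝 (Y ω)) := by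
    intro μ hμ
    have hint : ∫⁻ ω, ∑' k, ENNReal.ofReal (|X (φ (k+1)) ω - X (φ k) ω| ^ p) ∂μ ≠ ∞ := by
      rw [lintegral_tsum fun k =>
        (measE _ _ (hmeas (φ (k+1))) (hmeas (φ k))).aemeasurable]
      have h1 : ∑' k, ∫⁻ ω, ENNReal.ofReal (|X (φ (k+1)) ω - X (φ k) ω| ^ p) ∂μ
          ≤ ∑' k : ℕ, (2 : ℝ≥0∞)⁻¹ ^ k := by
        refine ENNReal.tsum_le_tsum fun k => ?_
        exact le_trans (aux_lintegral_le hμ _) (hbound k _ _ (hφmono (Nat.le_succ k)) le_rfl)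
      refine ne_of_lt (lt_of_le_of_lt h1 ?_)
      rw [ENNReal.tsum_geometric]
      refine ENNReal.inv_lt_top.2 ?_
      simp [ENNReal.sub_half]
    have hfin' : ∀ᵐ ω ∂μ, ∑' k, ENNReal.ofReal (|X (φ (k+1)) ω - X (φ k) ω| ^ p) < ∞ :=
      ae_lt_top (Measurable.ennreal_tsum fun k =>
        measE _ _ (hmeas (φ (k+1))) (hmeas (φ k))) hint
    filter_upwards [hfin'] with ω hω
    -- the real series of p-th powers is summable
    have hsum : Summable (fun k => |X (φ (k+1)) ω - X (φ k) ω| ^ p) := by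
      have := ENNReal.summable_toReal hω.ne
      simpa [ENNReal.toReal_ofReal (Real.rpow_nonneg (abs_nonneg _) _)] using this
    -- hence the increments tend to 0 and are eventually ≤ 1
    have h0 : Tendsto (fun k => |X (φ (k+1)) ω - X (φ k) ω| ^ p) atTop (𝓝 0) :=
      hsum.tendsto_atTop_zero
    have hev : ∀ᶠ k in atTop, |X (φ (k+1)) ω - X (φ k) ω| ≤ 1 := by
      filter_upwards [h0.eventually (gt_mem_nhds (by norm_num : (0:ℝ) < 1))] with k hk
      by_contra h
      push_neg at h
      have : (1:ℝ) < |X (φ (k+1)) ω - X (φ k) ω| ^ p :=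
        (Real.one_lt_rpow_iff_of_pos (lt_trans one_pos h)).2 (Or.inl ⟨h, hp0⟩)
      linarith
    obtain ⟨K, hK⟩ := eventually_atTop.mp hev
    have hsum2 : Summable (fun k => |X (φ (k+1)) ω - X (φ k) ω|) := by
      rw [← summable_nat_add_iff K]
      refine Summable.of_nonneg_of_le (fun k => abs_nonneg _) (fun k => ?_)
        ((summable_nat_add_iff K).2 hsum)
      rcases eq_or_lt_of_le (abs_nonneg (X (φ (k + K + 1)) ω - X (φ (k + K)) ω)) with h | h
      · rw [← h, Real.zero_rpow hp0.ne']
      · simpa using Real.rpow_le_rpow_of_exponent_ge h (hK (k+K) (Nat.le_add_left _ _)) hp1'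
    have hcs : CauchySeq (fun k => X (φ k) ω) := by
      apply cauchySeq_of_summable_dist
      simpa [Real.dist_eq, abs_sub_comm] using hsum2
    obtain ⟨c, hc⟩ := cauchySeq_tendsto_of_complete hcs
    have hYc : Y ω = c := hc.liminf_eq
    rw [hYc]
    exact hc
  -- the key uniform bound via Fatou
  have hYk : ∀ k, upperExp P (fun ω => |X (φ k) ω - Y ω| ^ p) ≤ (2 : ℝ≥0∞)⁻¹ ^ k := by
    intro k
    refine iSup₂_le fun μ hμ => ?_
    have hFatou : ∫⁻ ω, ENNReal.ofReal (|X (φ k) ω - Y ω| ^ p) ∂μ ≤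
        liminf (fun j => ∫⁻ ω, ENNReal.ofReal (|X (φ k) ω - X (φ j) ω| ^ p) ∂μ) atTop := by
      refine le_trans ?_ (lintegral_liminf_le fun j => measE _ _ (hmeas (φ k)) (hmeas (φ j)))
      apply lintegral_mono_ae
      filter_upwards [hae μ hμ] with ω hω
      have hcont : Tendsto (fun j => ENNReal.ofReal (|X (φ k) ω - X (φ j) ω| ^ p)) atTop
          (𝓝 (ENNReal.ofReal (|X (φ k) ω - Y ω| ^ p))) := by
        apply (ENNReal.continuous_ofReal.tendsto _).comp
        have h1 : Tendsto (fun j => |X (φ k) ω - X (φ j) ω|) atTop (𝓝 (|X (φ k) ω - Y ω|)) :=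
          (continuous_abs.tendsto _).comp (tendsto_const_nhds.sub hω)
        exact (Real.continuousAt_rpow_const _ p (Or.inr hp0')).tendsto.comp h1
      exact hcont.liminf_eq.ge
    refine le_trans hFatou ?_
    refine liminf_le_of_frequently_le ?_
    refine Eventually.frequently ?_
    filter_upwards [eventually_ge_atTop k] with j hj
    exact le_trans (aux_lintegral_le hμ _) (hbound k _ _ le_rfl (hφmono hj))
  refine ⟨Y, hYmeas, ?_, ?_⟩
  · -- finiteness of Ê[|Y|^p]
    have h1 : upperExp P (fun ω => |Y ω| ^ p) ≤
        upperExp P (fun ω => |Y ω - X (φ 0) ω| ^ p) + upperExp P (fun ω => |X (φ 0) ω| ^ p) := by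
      refine aux_upperExp_le_add ((hYmeas.sub (hmeas (φ 0))).abs.pow measurable_const)
        fun ω => ?_
      simpa using aux_ofReal_tri hp0' hp1' (Y ω) (X (φ 0) ω) 0
    refine lt_of_le_of_lt h1 (ENNReal.add_lt_top.2 ⟨?_, hfin (φ 0)⟩)
    have heq : upperExp P (fun ω => |Y ω - X (φ 0) ω| ^ p) =
        upperExp P (fun ω => |X (φ 0) ω - Y ω| ^ p) := by
      unfold upperExp
      simp_rw [abs_sub_comm]
    rw [heq]
    exact lt_of_le_of_lt (hYk 0) (by norm_num)
  · -- the convergence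
    rw [ENNReal.tendsto_atTop_zero]
    intro ε hε
    have h2 : Tendsto (fun k : ℕ => (2 : ℝ≥0∞)⁻¹ ^ k + (2 : ℝ≥0∞)⁻¹ ^ k) atTop (𝓝 0) := by
      have h3 := ENNReal.tendsto_pow_atTop_nhds_zero_of_lt_one
        (by norm_num : (2 : ℝ≥0∞)⁻¹ < 1)
      simpa using h3.add h3
    obtain ⟨k, hk⟩ := eventually_atTop.mp (h2.eventually (eventually_le_nhds hε))
    refine ⟨φ k, fun n hn => ?_⟩
    have h3 : upperExp P (fun ω => |X n ω - Y ω| ^ p) ≤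
        upperExp P (fun ω => |X n ω - X (φ k) ω| ^ p) +
          upperExp P (fun ω => |X (φ k) ω - Y ω| ^ p) :=
      aux_upperExp_le_add (((hmeas n).sub (hmeas (φ k))).abs.pow measurable_const)
        fun ω => aux_ofReal_tri hp0' hp1' _ _ _
    exact le_trans h3 (le_trans (add_le_add (hbound k n (φ k) hn le_rfl) (hYk k)) (hk k le_rfl))
end
end

section
/- Let 𝒫 be a nonempty set of Borel probability measures on Ω = C₀^d(ℝ⁺) that is compact in the topology of weak convergence of probability measures and satisfies sup_{P∈𝒫} ∫ ψ(ω(t₁),…,ω(t_m)) dP < ∞ for every m ≥ 1, every 0 ≤ t₁ < … < t_m and every nonnegative ψ ∈ C_{l.Lip}(ℝ^{d×m}). Let 𝕃¹ be the set of Borel measurable X : Ω → ℝ with Ê[|X|] := sup_{P∈𝒫} ∫ |X| dP < ∞, equipped with the pseudometric d(X,Y) := sup_{P∈𝒫} ∫ |X − Y| dP. Then the closure of L_ip(Ω) in (𝕃¹, d) equals the closure of the set C_b(Ω) of bounded continuous real-valued functions on Ω in (𝕃¹, d). -/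
open MeasureTheory Filter Topology
open scoped NNReal ENNReal

noncomputable section

/-- The class `C_{l.Lip}`. -/
def CLlip {E : Type*} [NormedAddCommGroup E] (φ : E → ℝ) : Prop :=
  Continuous φ ∧ ∃ (C : ℝ) (k : ℕ), 0 ≤ C ∧
    ∀ x y : E, |φ x - φ y| ≤ C * (1 + ‖x‖ ^ k + ‖y‖ ^ k) * ‖x - y‖

/-- The space `L_ip(Ω)` of Lipschitz cylinder functions on `OmegaC d`. -/
def LipCyl (d : ℕ) : Set (OmegaC d → ℝ) :=
  {X | ∃ (m : ℕ) (t : Fin m → ℝ≥0) (φ : (Fin m → EuclideanSpace ℝ (Fin d)) → ℝ),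
    1 ≤ m ∧ StrictMono t ∧ CLlip φ ∧ ∀ ω : OmegaC d, X ω = φ (fun i => ω.1 (t i))}

/-- The upper expectation `Ê[|f|] = sup_{P∈𝒫} ∫ |f| dP ∈ [0,∞]`. -/
def upperExpAbs {d : ℕ} (P : Set (ProbabilityMeasure (OmegaC d))) (f : OmegaC d → ℝ) : ℝ≥0∞ :=
  ⨆ p ∈ P, ∫⁻ ω, ENNReal.ofReal |f ω| ∂(p : Measure (OmegaC d))

/-- The closure of a set `S` of functions inside `𝕃¹ = {X Borel : Ê[|X|] < ∞}` with respect
to the pseudometric `d(X,Y) = Ê[|X − Y|]`. -/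
def closureInL1 {d : ℕ} (P : Set (ProbabilityMeasure (OmegaC d)))
    (S : Set (OmegaC d → ℝ)) : Set (OmegaC d → ℝ) :=
  {X | Measurable X ∧ upperExpAbs P X < ∞ ∧
    ∀ ε : ℝ, 0 < ε → ∃ Y ∈ S, upperExpAbs P (fun ω => X ω - Y ω) ≤ ENNReal.ofReal ε}

/-!
Truncating a cylinder function `Z = φ(ω(t₁), …, ω(tₘ))` at height `N` costs at most `Z² / N`, and
`Z² = φ²(ω(t₁), …, ω(tₘ))` with `φ² ∈ C_{l.Lip}`, so the moment bound makes the cost uniformly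
small over `𝒫`. Conversely, a bounded continuous `Y` is the increasing pointwise limit of its
inf-convolutions `Y_L = inf_{ω'} (Y ω' + L ρ(ω, ω'))`, which are `L`-Lipschitz for `ρ`; and a
`ρ`-Lipschitz `G` is approximated by the cylinder function `G ∘ J_n`, where `J_n ω` interpolates
`ω` linearly on the grid of mesh `1 / n`, since `ρ(ω, J_n ω)` is bounded by `2⁻ᵀ` plus a
modulus of continuity of `ω` on `[0, T + 1]` which decreases to `0` in `n`. In both steps the
errors decrease pointwise to `0` through bounded continuous functions, and Dini's theorem on the
weakly compact set `𝒫` turns this into uniform convergence of their integrals.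
-/

def ramp (x : ℝ) : ℝ := max 0 (min 1 x)

lemma ramp_nonneg (x : ℝ) : 0 ≤ ramp x := le_max_left _ _

lemma ramp_le_one (x : ℝ) : ramp x ≤ 1 := max_le zero_le_one (min_le_left _ _)

lemma ramp_of_nonpos {x : ℝ} (hx : x ≤ 0) : ramp x = 0 := by simp [ramp, hx]

lemma ramp_of_one_le {x : ℝ} (hx : 1 ≤ x) : ramp x = 1 := by simp [ramp, hx]

lemma monotone_ramp : Monotone ramp := fun _ _ h => max_le_max le_rfl (min_le_min le_rfl h)

@[fun_prop]
lemma continuous_ramp : Continuous ramp := by unfold ramp; fun_prop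

section SmoothModulus

variable {K E : Type*} [PseudoMetricSpace K] [CompactSpace K] [PseudoMetricSpace E]

/-- A continuous version of the modulus of continuity of `a` at scale `1 / n`: pairs at distance
at most `1 / n` get full weight, pairs at distance at least `2 / n` get none. -/
def smoothModulus (n : ℕ) (a : C(K, E)) : ℝ :=
  ‖(⟨fun p : K × K => ramp (2 - n * dist p.1 p.2) * dist (a p.1) (a p.2), by fun_prop⟩ :
    C(K × K, ℝ))‖

lemma ramp_mul_dist_le_smoothModulus (n : ℕ) (a : C(K, E)) (s u : K) :
    ramp (2 - n * dist s u) * dist (a s) (a u) ≤ smoothModulus n a :=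
  (le_abs_self _).trans (ContinuousMap.norm_coe_le_norm
    ⟨fun p : K × K => ramp (2 - n * dist p.1 p.2) * dist (a p.1) (a p.2), by fun_prop⟩ (s, u))

lemma smoothModulus_le {n : ℕ} {a : C(K, E)} {c : ℝ} (hc : 0 ≤ c)
    (h : ∀ s u, ramp (2 - n * dist s u) * dist (a s) (a u) ≤ c) : smoothModulus n a ≤ c :=
  (ContinuousMap.norm_le _ hc).2 fun p => by
    have hp := mul_nonneg (ramp_nonneg (2 - n * dist p.1 p.2))
      (dist_nonneg (x := a p.1) (y := a p.2))
    rw [ContinuousMap.coe_mk, Real.norm_eq_abs, abs_of_nonneg hp]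
    exact h p.1 p.2

lemma smoothModulus_nonneg (n : ℕ) (a : C(K, E)) : 0 ≤ smoothModulus n a := norm_nonneg _

lemma dist_le_smoothModulus {n : ℕ} (a : C(K, E)) {s u : K} (h : n * dist s u ≤ 1) :
    dist (a s) (a u) ≤ smoothModulus n a := by
  simpa [ramp_of_one_le (by linarith : 1 ≤ 2 - n * dist s u)] using
    ramp_mul_dist_le_smoothModulus n a s u

lemma antitone_smoothModulus (a : C(K, E)) : Antitone fun n => smoothModulus n a :=
  fun m n hmn => smoothModulus_le (smoothModulus_nonneg _ _) fun s u =>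
    (mul_le_mul_of_nonneg_right (monotone_ramp (by gcongr)) dist_nonneg).trans
      (ramp_mul_dist_le_smoothModulus m a s u)

lemma lipschitzWith_smoothModulus (n : ℕ) :
    LipschitzWith 2 (smoothModulus n : C(K, E) → ℝ) := by
  refine LipschitzWith.of_le_add_mul _ fun a b => smoothModulus_le
    (add_nonneg (smoothModulus_nonneg n b) (by positivity)) fun s u => ?_
  have hdist : dist (a s) (a u) ≤ dist (b s) (b u) + 2 * dist a b := by
    linarith [dist_triangle4 (a s) (b s) (b u) (a u),
      ContinuousMap.dist_apply_le_dist (f := a) (g := b) s,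
      dist_comm (b u) (a u) ▸ ContinuousMap.dist_apply_le_dist (f := a) (g := b) u]
  calc ramp (2 - n * dist s u) * dist (a s) (a u)
      ≤ ramp (2 - n * dist s u) * dist (b s) (b u) + 2 * dist a b := by
        nlinarith [ramp_nonneg (2 - n * dist s u), ramp_le_one (2 - n * dist s u),
          dist_nonneg (x := a) (y := b)]
    _ ≤ smoothModulus n b + 2 * dist a b := by
        gcongr; exact ramp_mul_dist_le_smoothModulus n b s u

lemma tendsto_smoothModulus (a : C(K, E)) : Tendsto (fun n => smoothModulus n a) atTop (𝓝 0) := by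
  refine Metric.tendsto_atTop.2 fun ε hε => ?_
  obtain ⟨δ, hδ, hδε⟩ := Metric.uniformContinuous_iff.1
    (CompactSpace.uniformContinuous_of_continuous a.continuous) (ε / 2) (half_pos hε)
  obtain ⟨N, hN⟩ := exists_nat_gt (2 / δ)
  refine ⟨N, fun n hn => ?_⟩
  have hnδ : 2 ≤ n * δ := by
    rw [div_lt_iff₀ hδ] at hN; nlinarith [(Nat.cast_le (α := ℝ)).2 hn]
  rw [Real.dist_eq, sub_zero, abs_of_nonneg (smoothModulus_nonneg _ _)]
  refine (smoothModulus_le (half_pos hε).le fun s u => ?_).trans_lt (half_lt_self hε)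
  rcases lt_or_ge (dist s u) δ with h | h
  · exact (mul_le_of_le_one_left dist_nonneg (ramp_le_one _)).trans (hδε h).le
  · rw [ramp_of_nonpos (by nlinarith [(Nat.cast_nonneg n : (0 : ℝ) ≤ n)]), zero_mul]
    positivity

end SmoothModulus

section PathMetric

open Set

variable {E : Type*} [PseudoMetricSpace E]

def distIcc (T : ℝ≥0) (a b : C(ℝ≥0, E)) : ℝ :=
  dist (a.restrict (Icc 0 T)) (b.restrict (Icc 0 T))

lemma dist_apply_le_distIcc {T t : ℝ≥0} (ht : t ≤ T) (a b : C(ℝ≥0, E)) :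
    dist (a t) (b t) ≤ distIcc T a b :=
  ContinuousMap.dist_apply_le_dist (f := a.restrict (Icc 0 T)) (g := b.restrict (Icc 0 T))
    ⟨t, zero_le, ht⟩

lemma distIcc_le {T : ℝ≥0} {a b : C(ℝ≥0, E)} {C : ℝ} (hC : 0 ≤ C)
    (h : ∀ t ≤ T, dist (a t) (b t) ≤ C) : distIcc T a b ≤ C :=
  (ContinuousMap.dist_le hC).2 fun t => h t t.2.2

lemma distIcc_mono {T T' : ℝ≥0} (hT : T ≤ T') (a b : C(ℝ≥0, E)) :
    distIcc T a b ≤ distIcc T' a b :=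
  distIcc_le dist_nonneg fun _ ht => dist_apply_le_distIcc (ht.trans hT) a b

lemma continuous_distIcc (T : ℝ≥0) (a : C(ℝ≥0, E)) : Continuous (distIcc T a) :=
  continuous_const.dist (ContinuousMap.continuous_restrict _)

lemma min_one_le_add {x y z : ℝ} (h : x ≤ y + z) (hy : 0 ≤ y) (hz : 0 ≤ z) :
    min 1 x ≤ min 1 y + min 1 z := by
  simp only [min_def]; split_ifs <;> linarith

lemma tsum_half_pow_succ : ∑' i : ℕ, (1 / 2 : ℝ) ^ (i + 1) = 1 := by
  simp only [pow_succ, tsum_mul_right, tsum_geometric_two]; norm_num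

lemma summable_half_pow_succ : Summable fun i : ℕ => (1 / 2 : ℝ) ^ (i + 1) :=
  (summable_nat_add_iff 1).2 summable_geometric_two

/-- The metric `ρ` of `Ω`, on all continuous paths. -/
def pathDist (a b : C(ℝ≥0, E)) : ℝ :=
  ∑' i : ℕ, (1 / 2) ^ (i + 1) * min 1 (distIcc (i + 1) a b)

lemma pathDist_term_nonneg (a b : C(ℝ≥0, E)) (i : ℕ) :
    0 ≤ (1 / 2 : ℝ) ^ (i + 1) * min 1 (distIcc (i + 1) a b) :=
  mul_nonneg (by positivity) (le_min zero_le_one dist_nonneg)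

lemma pathDist_term_le (a b : C(ℝ≥0, E)) (i : ℕ) :
    (1 / 2 : ℝ) ^ (i + 1) * min 1 (distIcc (i + 1) a b) ≤ (1 / 2) ^ (i + 1) :=
  mul_le_of_le_one_right (by positivity) (min_le_left _ _)

lemma summable_pathDist (a b : C(ℝ≥0, E)) :
    Summable fun i : ℕ => (1 / 2 : ℝ) ^ (i + 1) * min 1 (distIcc (i + 1) a b) :=
  summable_half_pow_succ.of_nonneg_of_le (pathDist_term_nonneg a b) (pathDist_term_le a b)

lemma pathDist_term_le_pathDist (a b : C(ℝ≥0, E)) (i : ℕ) :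
    (1 / 2 : ℝ) ^ (i + 1) * min 1 (distIcc (i + 1) a b) ≤ pathDist a b :=
  (summable_pathDist a b).le_tsum i fun j _ => pathDist_term_nonneg a b j

lemma pathDist_self (a : C(ℝ≥0, E)) : pathDist a a = 0 := by
  simp [pathDist, distIcc]

lemma pathDist_comm (a b : C(ℝ≥0, E)) : pathDist a b = pathDist b a := by
  simp [pathDist, distIcc, dist_comm]

lemma pathDist_triangle (a b c : C(ℝ≥0, E)) : pathDist a c ≤ pathDist a b + pathDist b c := by
  rw [pathDist, pathDist, pathDist, ← (summable_pathDist a b).tsum_add (summable_pathDist b c)]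
  refine (summable_pathDist a c).tsum_le_tsum (fun i => ?_)
    ((summable_pathDist a b).add (summable_pathDist b c))
  rw [← mul_add]
  exact mul_le_mul_of_nonneg_left (min_one_le_add (dist_triangle _ _ _) dist_nonneg dist_nonneg)
    (by positivity)

lemma pathDist_le_of_forall_dist_le {a b : C(ℝ≥0, E)} {r : ℝ} (hr : 0 ≤ r)
    (h : ∀ t, dist (a t) (b t) ≤ r) : pathDist a b ≤ r := by
  calc pathDist a b ≤ ∑' i : ℕ, (1 / 2 : ℝ) ^ (i + 1) * r :=
        (summable_pathDist a b).tsum_le_tsum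
          (fun i => mul_le_mul_of_nonneg_left ((min_le_right _ _).trans
            (distIcc_le hr fun t _ => h t)) (by positivity))
          (summable_half_pow_succ.mul_right r)
    _ = r := by rw [tsum_mul_right, tsum_half_pow_succ, one_mul]

lemma pathDist_le_min_distIcc_add (T : ℕ) (a b : C(ℝ≥0, E)) :
    pathDist a b ≤ min 1 (distIcc T a b) + (1 / 2) ^ T := by
  rw [pathDist, ← (summable_pathDist a b).sum_add_tsum_nat_add T]
  gcongr
  · refine (Finset.sum_le_sum fun i hi => mul_le_mul_of_nonneg_left
      (min_le_min_left 1 (distIcc_mono (T' := T) ?_ a b)) (by positivity)).trans ?_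
    · exact_mod_cast Finset.mem_range.1 hi
    rw [← Finset.sum_mul]
    refine mul_le_of_le_one_left (le_min zero_le_one dist_nonneg) ?_
    exact (summable_half_pow_succ.sum_le_tsum _ fun i _ => by positivity).trans_eq
      tsum_half_pow_succ
  · calc _ ≤ ∑' i : ℕ, (1 / 2 : ℝ) ^ T * (1 / 2) ^ (i + 1) :=
          ((summable_nat_add_iff T).2 (summable_pathDist a b)).tsum_le_tsum
            (fun i => (pathDist_term_le a b (i + T)).trans_eq (by ring))
            (summable_half_pow_succ.mul_left _)
      _ = (1 / 2) ^ T := by rw [tsum_mul_left, tsum_half_pow_succ, mul_one]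

lemma continuous_pathDist (a : C(ℝ≥0, E)) : Continuous (pathDist a) := by
  refine continuous_tsum (fun i => continuous_const.mul (continuous_const.min
    (continuous_distIcc _ a))) summable_half_pow_succ fun i b => ?_
  rw [Real.norm_eq_abs, abs_of_nonneg (pathDist_term_nonneg a b i)]
  exact pathDist_term_le a b i

lemma exists_pathDist_lt_subset {a : C(ℝ≥0, E)} {U : Set C(ℝ≥0, E)} (hU : U ∈ 𝓝 a) :
    ∃ ε > 0, ∀ b, pathDist a b < ε → b ∈ U := by
  obtain ⟨⟨K, V⟩, ⟨hK, hV⟩, hKV⟩ :=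
    (nhds_basis_uniformity' ContinuousMap.hasBasis_compactConvergenceUniformity).mem_iff.1 hU
  obtain ⟨ε, hε, hεV⟩ := Metric.mem_uniformity_dist.1 hV
  obtain ⟨u, hu⟩ := hK.bddAbove
  obtain ⟨i, hi⟩ := exists_nat_ge u
  refine ⟨(1 / 2) ^ (i + 1) * min 1 ε, by positivity, fun b hb => hKV fun t ht => hεV ?_⟩
  have hmin : min 1 (distIcc (i + 1) a b) < min 1 ε := lt_of_mul_lt_mul_left
    ((pathDist_term_le_pathDist a b i).trans_lt hb) (by positivity)
  have hdist : distIcc (i + 1) a b < ε := by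
    by_contra! h; exact hmin.not_ge (min_le_min le_rfl h)
  exact (dist_apply_le_distIcc ((hu ht).trans (hi.trans (le_add_of_nonneg_right zero_le_one)))
    a b).trans_lt hdist

variable (E) in
/-- `ρ` as a pseudometric whose topology is, definitionally, the compact-open one. -/
abbrev pathPseudoMetricSpace : PseudoMetricSpace C(ℝ≥0, E) :=
  .ofDistTopology pathDist pathDist_self pathDist_comm pathDist_triangle fun s =>
    ⟨fun hs a ha => exists_pathDist_lt_subset (hs.mem_nhds ha), fun h =>
      isOpen_iff_mem_nhds.2 fun a ha => by
        obtain ⟨ε, hε, hεs⟩ := h a ha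
        exact mem_of_superset ((isOpen_lt (continuous_pathDist a) continuous_const).mem_nhds
          (by rwa [mem_ofPred_eq, pathDist_self])) hεs⟩

end PathMetric

section InfConvolution

open Set

variable {α : Type*} [PseudoMetricSpace α] {f : α → ℝ}

/-- The inf-convolution of `f` with `L · dist`; for `f` bounded below it is the largest
`L`-Lipschitz minorant of `f`. -/
def infConv (f : α → ℝ) (L : ℝ≥0) (x : α) : ℝ :=
  ⨅ y, f y + L * dist x y

lemma infConv_le_add (hf : BddBelow (range f)) (L : ℝ≥0) (x y : α) :
    infConv f L x ≤ f y + L * dist x y := by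
  obtain ⟨m, hm⟩ := hf
  refine ciInf_le ⟨m, ?_⟩ y
  rintro _ ⟨z, rfl⟩
  exact le_add_of_le_of_nonneg (hm ⟨z, rfl⟩) (by positivity)

lemma infConv_le (hf : BddBelow (range f)) (L : ℝ≥0) (x : α) : infConv f L x ≤ f x := by
  simpa using infConv_le_add hf L x x

lemma le_infConv {L : ℝ≥0} {x : α} {c : ℝ} (h : ∀ y, c ≤ f y + L * dist x y) :
    c ≤ infConv f L x :=
  have : Nonempty α := ⟨x⟩
  le_ciInf h

lemma monotone_infConv (hf : BddBelow (range f)) (x : α) : Monotone fun L => infConv f L x :=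
  fun _ _ hL => le_infConv fun y => (infConv_le_add hf _ x y).trans (by gcongr)

lemma lipschitzWith_infConv (hf : BddBelow (range f)) (L : ℝ≥0) : LipschitzWith L (infConv f L) :=
  LipschitzWith.of_le_add_mul L fun x x' => by
    rw [← sub_le_iff_le_add]
    refine le_infConv fun y => ?_
    have := dist_triangle x x' y
    have := infConv_le_add hf L x y
    rw [sub_le_iff_le_add]
    nlinarith [L.coe_nonneg]

lemma tendsto_infConv (hf : BddBelow (range f)) {x : α} (hx : ContinuousAt f x) :
    Tendsto (fun n : ℕ => infConv f n x) atTop (𝓝 (f x)) := by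
  refine tendsto_order.2 ⟨fun c hc => ?_, fun c hc =>
    Eventually.of_forall fun n => (infConv_le hf n x).trans_lt hc⟩
  obtain ⟨c', hcc', hc'⟩ := exists_between hc
  obtain ⟨δ, hδ, hδc'⟩ := Metric.eventually_nhds_iff.1 (hx.eventually (lt_mem_nhds hc'))
  obtain ⟨m, hm⟩ := hf
  obtain ⟨N, hN⟩ := exists_nat_gt ((f x - m) / δ)
  filter_upwards [eventually_ge_atTop N] with n hn
  refine hcc'.trans_le (le_infConv fun y => ?_)
  have hfy : m ≤ f y := hm ⟨y, rfl⟩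
  rcases lt_or_ge (dist x y) δ with hy | hy
  · exact le_add_of_le_of_nonneg (hδc' (dist_comm x y ▸ hy)).le (by positivity)
  · have : f x - m < n * δ := by
      rw [div_lt_iff₀ hδ] at hN
      exact hN.trans_le (by gcongr)
    push_cast
    nlinarith [(Nat.cast_nonneg n : (0 : ℝ) ≤ n)]

end InfConvolution

/-- Dini's theorem for the functions `p ↦ ∫ f n ∂p`, which are continuous in the weak topology. -/
theorem IsCompact.eventually_forall_lintegral_le_of_antitone {X : Type*} [TopologicalSpace X]
    [MeasurableSpace X] [OpensMeasurableSpace X] {K : Set (ProbabilityMeasure X)}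
    (hK : IsCompact K) {f : ℕ → X → ℝ} (hf : ∀ n, Continuous (f n)) (hanti : Antitone f)
    (hlim : ∀ x, Tendsto (f · x) atTop (𝓝 0)) {C : ℝ} (hC : ∀ x, f 0 x ≤ C) {ε : ℝ}
    (hε : 0 < ε) :
    ∀ᶠ n in atTop, ∀ p ∈ K, ∫⁻ x, ENNReal.ofReal (f n x) ∂(p : Measure X) ≤ ENNReal.ofReal ε := by
  have hnonneg (n : ℕ) (x : X) : 0 ≤ f n x :=
    Antitone.le_of_tendsto (fun _ _ h => hanti h x) (hlim x) n
  have hbound (n : ℕ) (x : X) : ‖f n x‖ ≤ C := by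
    rw [Real.norm_eq_abs, abs_of_nonneg (hnonneg n x)]
    exact (hanti (Nat.zero_le n) x).trans (hC x)
  let F (n : ℕ) : BoundedContinuousFunction X ℝ :=
    .ofNormedAddCommGroup (f n) (hf n) C (hbound n)
  have hint (n : ℕ) (p : ProbabilityMeasure X) : Integrable (f n) (p : Measure X) :=
    (F n).integrable _
  have hdini : TendstoUniformlyOn
      (fun n (p : ProbabilityMeasure X) => ∫ x, f n x ∂(p : Measure X)) 0 atTop K := by
    refine Antitone.tendstoUniformlyOn_of_forall_tendsto hK (fun n =>
      (ProbabilityMeasure.continuous_integral_boundedContinuousFunction (F n)).continuousOn)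
      (fun p _ m n hmn => integral_mono (hint n p) (hint m p) (hanti hmn)) continuousOn_const
      (fun p _ => ?_)
    simpa using tendsto_integral_of_dominated_convergence (fun _ => C)
      (fun n => (hf n).aestronglyMeasurable) (integrable_const C)
      (fun n => ae_of_all _ (hbound n)) (ae_of_all _ hlim)
  filter_upwards [Metric.tendstoUniformlyOn_iff.1 hdini ε hε] with n hn p hp
  rw [← ofReal_integral_eq_lintegral_ofReal (hint n p) (ae_of_all _ (hnonneg n))]
  exact ENNReal.ofReal_le_ofReal
    ((le_abs_self _).trans (by simpa [Real.dist_eq] using (hn p hp).le))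

theorem IsCompact.eventually_forall_lintegral_smoothModulus_le {X K E : Type*}
    [TopologicalSpace X] [MeasurableSpace X] [OpensMeasurableSpace X] [PseudoMetricSpace K]
    [CompactSpace K] [PseudoMetricSpace E] {P : Set (ProbabilityMeasure X)} (hP : IsCompact P)
    {g : X → C(K, E)} (hg : Continuous g) (c : ℝ≥0) {ε : ℝ} (hε : 0 < ε) :
    ∀ᶠ n in atTop, ∀ p ∈ P,
      ∫⁻ x, ENNReal.ofReal (c * min 1 (smoothModulus n (g x))) ∂(p : Measure X) ≤
        ENNReal.ofReal ε :=
  hP.eventually_forall_lintegral_le_of_antitone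
    (fun n => continuous_const.mul (continuous_const.min
      ((lipschitzWith_smoothModulus n).continuous.comp hg)))
    (fun _ _ hmn x => mul_le_mul_of_nonneg_left
      (min_le_min_left 1 (antitone_smoothModulus _ hmn)) c.coe_nonneg)
    (fun x => by simpa using
      ((tendsto_const_nhds (x := (1 : ℝ))).min (tendsto_smoothModulus (g x))).const_mul (c : ℝ))
    (fun _ => mul_le_of_le_one_right c.coe_nonneg (min_le_left _ _)) hε

section Interpolation

open Set

/-- The hat function of the integer grid centred at `j`. -/
def hat (j : ℕ) (s : ℝ) : ℝ := ramp (s - j + 1) - ramp (s - j)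

@[fun_prop]
lemma continuous_hat (j : ℕ) : Continuous (hat j) := by unfold hat; fun_prop

lemma hat_nonneg (j : ℕ) (s : ℝ) : 0 ≤ hat j s := sub_nonneg.2 (monotone_ramp (by linarith))

lemma abs_sub_lt_one_of_hat_ne_zero {j : ℕ} {s : ℝ} (h : hat j s ≠ 0) : |s - j| < 1 := by
  by_contra! h'
  rcases le_abs'.1 h' with h' | h'
  · exact h (by rw [hat, ramp_of_nonpos (by linarith), ramp_of_nonpos (by linarith), sub_self])
  · exact h (by rw [hat, ramp_of_one_le (by linarith), ramp_of_one_le (by linarith), sub_self])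

lemma sum_range_hat (k : ℕ) (s : ℝ) :
    ∑ j ∈ Finset.range k, hat j s = ramp (s + 1) - ramp (s - k + 1) := by
  convert Finset.sum_range_sub' (fun j : ℕ => ramp (s - j + 1)) k using 2 with j
  · simp only [hat, Nat.cast_succ]; ring_nf
  · simp

lemma sum_range_hat_le_one (k : ℕ) (s : ℝ) : ∑ j ∈ Finset.range k, hat j s ≤ 1 := by
  rw [sum_range_hat]; linarith [ramp_le_one (s + 1), ramp_nonneg (s - k + 1)]

lemma sum_range_succ_hat {m : ℕ} {s : ℝ} (hs : 0 ≤ s) (hsm : s ≤ m) :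
    ∑ j ∈ Finset.range (m + 1), hat j s = 1 := by
  rw [sum_range_hat, ramp_of_one_le (by linarith), ramp_of_nonpos (by push_cast; linarith),
    sub_zero]

variable {E : Type*} [NormedAddCommGroup E] [NormedSpace ℝ E]

lemma norm_sum_smul_le_sum_mul {ι : Type*} (s : Finset ι) {w : ι → ℝ} {v : ι → E} {r : ℝ}
    (hw : ∀ i ∈ s, 0 ≤ w i) (hv : ∀ i ∈ s, w i ≠ 0 → ‖v i‖ ≤ r) :
    ‖∑ i ∈ s, w i • v i‖ ≤ (∑ i ∈ s, w i) * r := by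
  rw [Finset.sum_mul]
  refine (norm_sum_le _ _).trans (Finset.sum_le_sum fun i hi => ?_)
  rw [norm_smul, Real.norm_eq_abs, abs_of_nonneg (hw i hi)]
  rcases eq_or_ne (w i) 0 with h | h
  · simp [h]
  · exact mul_le_mul_of_nonneg_left (hv i hi h) (hw i hi)

/-- The path through `0` at time `0` and `x j` at time `(j + 1) / n` that is affine on each
`[k / n, (k + 1) / n]`, and returns to `0` after the last node. -/
def linearInterpolation (n : ℕ) {m : ℕ} (x : Fin m → E) : C(ℝ≥0, E) :=
  ⟨fun t => ∑ j : Fin m, hat ((j : ℕ) + 1) (n * t) • x j, by fun_prop⟩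

lemma linearInterpolation_apply_zero (n : ℕ) {m : ℕ} (x : Fin m → E) :
    linearInterpolation n x 0 = 0 := by
  simp only [linearInterpolation, ContinuousMap.coe_mk]
  refine Finset.sum_eq_zero fun j _ => ?_
  rw [NNReal.coe_zero, mul_zero, hat, ramp_of_nonpos (by push_cast; linarith),
    ramp_of_nonpos (by push_cast; linarith), sub_self, zero_smul]

lemma dist_linearInterpolation_apply_le (n : ℕ) {m : ℕ} (x y : Fin m → E) (t : ℝ≥0) :
    dist (linearInterpolation n x t) (linearInterpolation n y t) ≤ dist x y := by
  simp only [dist_eq_norm, linearInterpolation, ContinuousMap.coe_mk]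
  rw [← Finset.sum_sub_distrib]
  simp_rw [← smul_sub]
  refine (norm_sum_smul_le_sum_mul _ (fun j _ => hat_nonneg _ _)
    fun j _ _ => norm_le_pi_norm (x - y) j).trans (mul_le_of_le_one_left (norm_nonneg _) ?_)
  rw [Fin.sum_univ_eq_sum_range (fun j => hat (j + 1) (n * t)) m]
  linarith [Finset.sum_range_succ' (fun j => hat j (n * t)) m, hat_nonneg 0 (n * t),
    sum_range_hat_le_one (m + 1) (n * t)]

lemma dist_apply_linearInterpolation_le {a : C(ℝ≥0, E)} (ha : a 0 = 0) {n m : ℕ} {t : ℝ≥0}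
    (htm : (n : ℝ) * t ≤ m) {r : ℝ}
    (hr : ∀ j ≤ m, |(n : ℝ) * t - j| < 1 → dist (a t) (a (j / n)) ≤ r) :
    dist (a t) (linearInterpolation n (fun j : Fin m => a ((j + 1 : ℕ) / n)) t) ≤ r := by
  have hsum := sum_range_succ_hat (by positivity) htm
  have hdecomp : a t - linearInterpolation n (fun j : Fin m => a ((j + 1 : ℕ) / n)) t =
      ∑ j ∈ Finset.range (m + 1), hat j (n * t) • (a t - a (j / n)) := by
    simp_rw [smul_sub, Finset.sum_sub_distrib, ← Finset.sum_smul, hsum, one_smul]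
    rw [Finset.sum_range_succ', Nat.cast_zero, zero_div, ha, smul_zero, add_zero,
      ← Fin.sum_univ_eq_sum_range (fun k => hat (k + 1) (n * t) • a ((k + 1 : ℕ) / n))]
    rfl
  rw [dist_eq_norm, hdecomp]
  refine (norm_sum_smul_le_sum_mul (E := E) _ (fun j _ => hat_nonneg _ _)
    fun j hj hne => ?_).trans_eq (by rw [hsum, one_mul])
  rw [← dist_eq_norm]
  exact hr j (Nat.lt_succ_iff.1 (Finset.mem_range.1 hj)) (abs_sub_lt_one_of_hat_ne_zero hne)

lemma pathDist_linearInterpolation_le {a : C(ℝ≥0, E)} (ha : a 0 = 0) {T n : ℕ} (hn : 0 < n)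
    (hTn : T ≤ n) :
    pathDist a (linearInterpolation n fun j : Fin (n * n) => a ((j + 1 : ℕ) / n)) ≤
      min 1 (smoothModulus n (a.restrict (Icc (0 : ℝ≥0) (T + 1)))) + (1 / 2) ^ T := by
  refine (pathDist_le_min_distIcc_add T _ _).trans (add_le_add_left (min_le_min_left 1
    (distIcc_le (smoothModulus_nonneg _ _) fun t ht => ?_)) _)
  have hn' : (0 : ℝ) < n := by exact_mod_cast hn
  have htT : (t : ℝ) ≤ T := by exact_mod_cast ht
  have hTn' : (T : ℝ) ≤ n := by exact_mod_cast hTn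
  refine dist_apply_linearInterpolation_le ha (by push_cast; nlinarith [t.coe_nonneg])
    fun j _ hj => ?_
  have hjt : (n : ℝ) * |(t : ℝ) - j / n| < 1 := by
    rwa [show (n : ℝ) * t - j = n * (t - j / n) by field_simp, abs_mul, abs_of_pos hn'] at hj
  have hjT : ((j / n : ℝ≥0) : ℝ) ≤ T + 1 := by
    rw [NNReal.coe_div, NNReal.coe_natCast, NNReal.coe_natCast, div_le_iff₀ hn']
    have hn1 : (1 : ℝ) ≤ n := by exact_mod_cast hn
    linarith [(abs_lt.1 hj).1, mul_le_mul_of_nonneg_left htT hn'.le]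
  exact dist_le_smoothModulus (a.restrict (Icc (0 : ℝ≥0) (T + 1)))
    (s := ⟨t, zero_le, by exact_mod_cast htT.trans (le_add_of_nonneg_right zero_le_one)⟩)
    (u := ⟨j / n, zero_le, by exact_mod_cast hjT⟩)
    (by rw [Subtype.dist_eq, NNReal.dist_eq]; push_cast; exact hjt.le)

end Interpolation

section CLlip

lemma max_one_max_pow_le {a b : ℝ} (ha : 0 ≤ a) (hb : 0 ≤ b) (k : ℕ) :
    max 1 (max a b) ^ k ≤ 1 + a ^ k + b ^ k := by
  have := pow_nonneg ha k
  have := pow_nonneg hb k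
  rcases max_choice 1 (max a b) with h | h <;> rw [h]
  · rw [one_pow]; linarith
  · rcases max_choice a b with h' | h' <;> rw [h'] <;> linarith

lemma one_add_pow_add_pow_le {a b : ℝ} (ha : 0 ≤ a) (hb : 0 ≤ b) (k : ℕ) :
    1 + a ^ k + b ^ k ≤ 3 * max 1 (max a b) ^ k := by
  have h1 : 1 ≤ max 1 (max a b) ^ k := one_le_pow₀ (le_max_left _ _)
  have ha' : a ^ k ≤ max 1 (max a b) ^ k :=
    pow_le_pow_left₀ ha (le_max_of_le_right (le_max_left a b)) k
  have hb' : b ^ k ≤ max 1 (max a b) ^ k :=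
    pow_le_pow_left₀ hb (le_max_of_le_right (le_max_right a b)) k
  linarith

variable {F : Type*} [NormedAddCommGroup F] {φ ψ : F → ℝ}

lemma CLlip.exists_le_max (h : CLlip φ) : ∃ (C : ℝ) (k : ℕ), 0 ≤ C ∧
    ∀ x y, |φ x - φ y| ≤ C * max 1 (max ‖x‖ ‖y‖) ^ k * ‖x - y‖ := by
  obtain ⟨-, C, k, hC, h⟩ := h
  refine ⟨3 * C, k, by positivity, fun x y => (h x y).trans ?_⟩
  calc C * (1 + ‖x‖ ^ k + ‖y‖ ^ k) * ‖x - y‖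
      ≤ C * (3 * max 1 (max ‖x‖ ‖y‖) ^ k) * ‖x - y‖ := by
        gcongr; exact one_add_pow_add_pow_le (norm_nonneg x) (norm_nonneg y) k
    _ = 3 * C * max 1 (max ‖x‖ ‖y‖) ^ k * ‖x - y‖ := by ring

lemma CLlip.of_le_max (hφ : Continuous φ) {C : ℝ} {k : ℕ} (hC : 0 ≤ C)
    (h : ∀ x y, |φ x - φ y| ≤ C * max 1 (max ‖x‖ ‖y‖) ^ k * ‖x - y‖) : CLlip φ :=
  ⟨hφ, C, k, hC, fun x y => (h x y).trans (by
    gcongr; exact max_one_max_pow_le (norm_nonneg x) (norm_nonneg y) k)⟩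

lemma CLlip.exists_abs_le (h : CLlip φ) :
    ∃ (D : ℝ) (k : ℕ), 0 ≤ D ∧ ∀ x, |φ x| ≤ D * max 1 ‖x‖ ^ k := by
  obtain ⟨C, k, hC, h⟩ := h.exists_le_max
  refine ⟨|φ 0| + C, k + 1, by positivity, fun x => ?_⟩
  have hR : 1 ≤ max 1 ‖x‖ := le_max_left _ _
  have hxR : ‖x‖ ≤ max 1 ‖x‖ := le_max_right _ _
  have hx0 := h x 0
  rw [norm_zero, max_eq_left (norm_nonneg x), sub_zero] at hx0
  calc |φ x| ≤ |φ 0| + |φ x - φ 0| := by linarith [abs_sub_abs_le_abs_sub (φ x) (φ 0)]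
    _ ≤ |φ 0| * 1 + C * max 1 ‖x‖ ^ k * max 1 ‖x‖ := by
        rw [mul_one]; gcongr; exact hx0.trans (by gcongr)
    _ ≤ |φ 0| * max 1 ‖x‖ ^ (k + 1) + C * max 1 ‖x‖ ^ (k + 1) := by
        rw [mul_assoc C, ← pow_succ]; gcongr; exact one_le_pow₀ hR
    _ = (|φ 0| + C) * max 1 ‖x‖ ^ (k + 1) := by ring

lemma CLlip.mul (hφ : CLlip φ) (hψ : CLlip ψ) : CLlip fun x => φ x * ψ x := by
  obtain ⟨C₁, k₁, hC₁, h₁⟩ := hφ.exists_le_max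
  obtain ⟨C₂, k₂, hC₂, h₂⟩ := hψ.exists_le_max
  obtain ⟨D₁, j₁, hD₁, g₁⟩ := hφ.exists_abs_le
  obtain ⟨D₂, j₂, hD₂, g₂⟩ := hψ.exists_abs_le
  refine .of_le_max (hφ.1.mul hψ.1) (C := D₁ * C₂ + D₂ * C₁) (k := j₁ + k₂ + j₂ + k₁)
    (by positivity) fun x y => ?_
  set R := max 1 (max ‖x‖ ‖y‖)
  have hR : 1 ≤ R := le_max_left _ _
  have hxR : max 1 ‖x‖ ≤ R := max_le_max le_rfl (le_max_left _ _)
  have hyR : max 1 ‖y‖ ≤ R := max_le_max le_rfl (le_max_right _ _)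
  calc |φ x * ψ x - φ y * ψ y| = |φ x * (ψ x - ψ y) + ψ y * (φ x - φ y)| := by ring_nf
    _ ≤ |φ x| * |ψ x - ψ y| + |ψ y| * |φ x - φ y| := by
        rw [← abs_mul, ← abs_mul]; exact abs_add_le _ _
    _ ≤ D₁ * R ^ j₁ * (C₂ * R ^ k₂ * ‖x - y‖) + D₂ * R ^ j₂ * (C₁ * R ^ k₁ * ‖x - y‖) := by
        gcongr
        · exact (g₁ x).trans (by gcongr)
        · exact h₂ x y
        · exact (g₂ y).trans (by gcongr)
        · exact h₁ x y
    _ = (D₁ * C₂ * R ^ (j₁ + k₂) + D₂ * C₁ * R ^ (j₂ + k₁)) * ‖x - y‖ := by ring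
    _ ≤ (D₁ * C₂ * R ^ (j₁ + k₂ + j₂ + k₁) + D₂ * C₁ * R ^ (j₁ + k₂ + j₂ + k₁)) * ‖x - y‖ := by
        have e₁ : R ^ (j₁ + k₂) ≤ R ^ (j₁ + k₂ + j₂ + k₁) := pow_le_pow_right₀ hR (by omega)
        have e₂ : R ^ (j₂ + k₁) ≤ R ^ (j₁ + k₂ + j₂ + k₁) := pow_le_pow_right₀ hR (by omega)
        exact mul_le_mul_of_nonneg_right (add_le_add
          (mul_le_mul_of_nonneg_left e₁ (by positivity))
          (mul_le_mul_of_nonneg_left e₂ (by positivity))) (norm_nonneg _)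
    _ = (D₁ * C₂ + D₂ * C₁) * R ^ (j₁ + k₂ + j₂ + k₁) * ‖x - y‖ := by ring

lemma LipschitzWith.cLlip {K : ℝ≥0} (h : LipschitzWith K φ) : CLlip φ :=
  .of_le_max h.continuous K.coe_nonneg (k := 0) fun x y => by
    simpa [Real.dist_eq, dist_eq_norm] using h.dist_le_mul x y

end CLlip

lemma abs_sub_max_neg_min_le {z N : ℝ} (hN : 0 < N) :
    |z - max (-N) (min N z)| ≤ z * z / N := by
  rw [le_div_iff₀ hN]
  rcases le_total z N with h₁ | h₁ <;> rcases le_total (-N) z with h₂ | h₂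
  · rw [min_eq_right h₁, max_eq_right h₂, sub_self, abs_zero, zero_mul]
    exact mul_self_nonneg z
  · rw [min_eq_right h₁, max_eq_left h₂, abs_of_nonpos (by linarith)]; nlinarith
  · rw [min_eq_left h₁, max_eq_right (by linarith), abs_of_nonneg (by linarith)]; nlinarith
  · linarith

section PathSpace

open Set

variable {d : ℕ} {P : Set (ProbabilityMeasure (OmegaC d))}

lemma continuous_of_mem_lipCyl {Z : OmegaC d → ℝ} (hZ : Z ∈ LipCyl d) : Continuous Z := by
  obtain ⟨m, t, φ, -, -, hφ, hZ⟩ := hZ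
  rw [funext hZ]
  exact hφ.1.comp (continuous_pi fun i => (continuous_eval_const (t i)).comp continuous_subtype_val)

lemma lintegral_le_upperExpAbs {p : ProbabilityMeasure (OmegaC d)} (hp : p ∈ P)
    (f : OmegaC d → ℝ) :
    ∫⁻ ω, ENNReal.ofReal |f ω| ∂(p : Measure (OmegaC d)) ≤ upperExpAbs P f :=
  le_iSup₂_of_le p hp le_rfl

lemma upperExpAbs_sub_le {X Y : OmegaC d → ℝ} (hX : Measurable X) (hY : Measurable Y)
    (Z : OmegaC d → ℝ) :
    upperExpAbs P (fun ω => X ω - Z ω) ≤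
      upperExpAbs P (fun ω => X ω - Y ω) + upperExpAbs P (fun ω => Y ω - Z ω) := by
  refine iSup₂_le fun p hp => ?_
  calc ∫⁻ ω, ENNReal.ofReal |X ω - Z ω| ∂(p : Measure (OmegaC d))
      ≤ ∫⁻ ω, (ENNReal.ofReal |X ω - Y ω| + ENNReal.ofReal |Y ω - Z ω|) ∂(p : Measure (OmegaC d)) :=
        lintegral_mono fun ω =>
          (ENNReal.ofReal_le_ofReal (abs_sub_le _ _ _)).trans ENNReal.ofReal_add_le
    _ = _ := lintegral_add_left (hX.sub hY).abs.ennreal_ofReal _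
    _ ≤ _ := add_le_add (lintegral_le_upperExpAbs hp _) (lintegral_le_upperExpAbs hp _)

lemma closureInL1_subset_closureInL1 {S S' : Set (OmegaC d → ℝ)} (hS : ∀ Y ∈ S, Measurable Y)
    (h : ∀ Y ∈ S, ∀ ε > 0, ∃ Z ∈ S', upperExpAbs P (fun ω => Y ω - Z ω) ≤ ENNReal.ofReal ε) :
    closureInL1 P S ⊆ closureInL1 P S' := by
  rintro X ⟨hXm, hXfin, hX⟩
  refine ⟨hXm, hXfin, fun ε hε => ?_⟩
  obtain ⟨Y, hYS, hXY⟩ := hX (ε / 2) (half_pos hε)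
  obtain ⟨Z, hZS', hYZ⟩ := h Y hYS (ε / 2) (half_pos hε)
  refine ⟨Z, hZS', (upperExpAbs_sub_le hXm (hS Y hYS) Z).trans ?_⟩
  rw [← add_halves ε, ENNReal.ofReal_add (half_pos hε).le (half_pos hε).le]
  exact add_le_add hXY hYZ

lemma exists_bounded_continuous_approx_of_mem_lipCyl
    (hmom : ∀ (m : ℕ), 1 ≤ m → ∀ t : Fin m → ℝ≥0, StrictMono t →
      ∀ ψ : (Fin m → EuclideanSpace ℝ (Fin d)) → ℝ, CLlip ψ → (∀ x, 0 ≤ ψ x) →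
      (⨆ p ∈ P, ∫⁻ ω : OmegaC d, ENNReal.ofReal (ψ (fun i => ω.1 (t i)))
        ∂(p : Measure (OmegaC d))) < ∞)
    {Z : OmegaC d → ℝ} (hZ : Z ∈ LipCyl d) {ε : ℝ} (hε : 0 < ε) :
    ∃ W ∈ {Y : OmegaC d → ℝ | Continuous Y ∧ ∃ M : ℝ, ∀ ω, |Y ω| ≤ M},
      upperExpAbs P (fun ω => Z ω - W ω) ≤ ENNReal.ofReal ε := by
  have hZc := continuous_of_mem_lipCyl hZ
  obtain ⟨m, t, φ, hm, ht, hφ, hZ⟩ := hZ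
  set ψ : (Fin m → EuclideanSpace ℝ (Fin d)) → ℝ := fun x => φ x * φ x
  have hB := hmom m hm t ht ψ (hφ.mul hφ) fun x => mul_self_nonneg (φ x)
  obtain ⟨N, hN⟩ := ENNReal.exists_nat_mul_gt (ENNReal.ofReal_pos.2 hε).ne' hB.ne
  have hN0 : (0 : ℝ) < N := Nat.cast_pos.2 (Nat.pos_of_ne_zero fun h => by simp [h] at hN)
  refine ⟨fun ω => max (-(N : ℝ)) (min (N : ℝ) (Z ω)),
    ⟨continuous_const.max (continuous_const.min hZc), N, fun ω => abs_le.2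
      ⟨le_max_left _ _, max_le (by linarith) (min_le_left _ _)⟩⟩, iSup₂_le fun p hp => ?_⟩
  calc ∫⁻ ω, ENNReal.ofReal |Z ω - max (-(N : ℝ)) (min (N : ℝ) (Z ω))| ∂(p : Measure (OmegaC d))
      ≤ ∫⁻ ω, ENNReal.ofReal (ψ fun i => ω.1 (t i)) * (N : ℝ≥0∞)⁻¹ ∂(p : Measure (OmegaC d)) :=
        lintegral_mono fun ω => by
          rw [← ENNReal.ofReal_natCast, ← div_eq_mul_inv, ← ENNReal.ofReal_div_of_pos hN0]
          exact ENNReal.ofReal_le_ofReal (hZ ω ▸ abs_sub_max_neg_min_le hN0)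
    _ ≤ (⨆ p ∈ P, ∫⁻ ω : OmegaC d, ENNReal.ofReal (ψ fun i => ω.1 (t i))
          ∂(p : Measure (OmegaC d))) * (N : ℝ≥0∞)⁻¹ := by
        rw [lintegral_mul_const' _ _ (ENNReal.inv_ne_top.2 (by exact_mod_cast hN0.ne'))]
        gcongr
        exact le_iSup₂_of_le p hp le_rfl
    _ ≤ ENNReal.ofReal ε := by
        rw [← div_eq_mul_inv]
        exact ENNReal.div_le_of_le_mul (mul_comm (N : ℝ≥0∞) _ ▸ hN.le)

/-- `Ω` with the metric `ρ`; its topology is definitionally the given one, so continuity and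
measurability statements transfer verbatim. -/
abbrev OmegaC.pseudoMetricSpace (d : ℕ) : PseudoMetricSpace (OmegaC d) :=
  .induced Subtype.val (pathPseudoMetricSpace _)

attribute [local instance] OmegaC.pseudoMetricSpace

def rhoLipschitz (d : ℕ) : Set (OmegaC d → ℝ) := {G | ∃ K, LipschitzWith K G}

lemma continuous_of_mem_rhoLipschitz {G : OmegaC d → ℝ} (hG : G ∈ rhoLipschitz d) :
    Continuous G :=
  hG.choose_spec.continuous

lemma exists_rhoLipschitz_approx_of_continuous (hP : IsCompact P) {Y : OmegaC d → ℝ}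
    (hY : Continuous Y) {M : ℝ} (hM : ∀ ω, |Y ω| ≤ M) {ε : ℝ} (hε : 0 < ε) :
    ∃ G ∈ rhoLipschitz d, upperExpAbs P (fun ω => Y ω - G ω) ≤ ENNReal.ofReal ε := by
  have hbdd : BddBelow (range Y) := ⟨-M, by rintro _ ⟨ω, rfl⟩; exact (abs_le.1 (hM ω)).1⟩
  obtain ⟨n, hn⟩ := (hP.eventually_forall_lintegral_le_of_antitone
    (f := fun n ω => Y ω - infConv Y n ω)
    (fun n => hY.sub (lipschitzWith_infConv hbdd n).continuous)
    (fun m n hmn ω => sub_le_sub_left (monotone_infConv hbdd ω (Nat.cast_le.2 hmn)) _)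
    (fun ω => by simpa using (tendsto_infConv hbdd (hY.continuousAt (x := ω))).const_sub (Y ω))
    (C := 2 * M) (fun ω => by
      have := le_infConv (f := Y) (L := 0) (x := ω) fun y => by simpa using (abs_le.1 (hM y)).1
      push_cast at this ⊢
      linarith [(abs_le.1 (hM ω)).2]) hε).exists
  refine ⟨infConv Y n, ⟨n, lipschitzWith_infConv hbdd n⟩, iSup₂_le fun p hp => ?_⟩
  simpa only [abs_of_nonneg (sub_nonneg.2 (infConv_le hbdd n _))] using hn p hp

lemma exists_lipCyl_approx_of_mem_rhoLipschitz (hP : IsCompact P) {G : OmegaC d → ℝ}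
    (hG : G ∈ rhoLipschitz d) {ε : ℝ} (hε : 0 < ε) :
    ∃ Z ∈ LipCyl d, upperExpAbs P (fun ω => G ω - Z ω) ≤ ENNReal.ofReal ε := by
  obtain ⟨K, hG⟩ := hG
  obtain ⟨T, hT⟩ : ∃ T : ℕ, K * (1 / 2 : ℝ) ^ T ≤ ε / 2 := by
    have := (tendsto_pow_atTop_nhds_zero_of_lt_one (by norm_num : (0 : ℝ) ≤ 1 / 2)
      (by norm_num)).const_mul (K : ℝ)
    rw [mul_zero] at this
    exact (this.eventually (gt_mem_nhds (half_pos hε))).exists.imp fun _ h => h.le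
  obtain ⟨n, hn, hTn⟩ := ((hP.eventually_forall_lintegral_smoothModulus_le
    (g := fun ω : OmegaC d => ω.1.restrict (Icc (0 : ℝ≥0) (T + 1)))
    ((ContinuousMap.continuous_restrict _).comp continuous_subtype_val) K (half_pos hε)).and
    (eventually_ge_atTop (max 1 T))).exists
  have hn0 : 0 < n := (le_max_left 1 T).trans hTn
  let Φ (x : Fin (n * n) → EuclideanSpace ℝ (Fin d)) : OmegaC d :=
    ⟨linearInterpolation n x, linearInterpolation_apply_zero n x⟩
  have hΦ : LipschitzWith 1 Φ := LipschitzWith.mk_one fun x y =>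
    pathDist_le_of_forall_dist_le dist_nonneg (dist_linearInterpolation_apply_le n x y)
  have hGΦ (ω : OmegaC d) : |G ω - G (Φ fun j => ω.1 ((j + 1 : ℕ) / n))| ≤
      K * min 1 (smoothModulus n (ω.1.restrict (Icc (0 : ℝ≥0) (T + 1)))) + K * (1 / 2) ^ T := by
    rw [← Real.dist_eq, ← mul_add]
    exact (hG.dist_le_mul _ _).trans (mul_le_mul_of_nonneg_left
      (pathDist_linearInterpolation_le ω.2 hn0 ((le_max_right 1 T).trans hTn)) K.coe_nonneg)
  refine ⟨fun ω => (G ∘ Φ) fun j => ω.1 ((j + 1 : ℕ) / n),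
    ⟨n * n, fun j => ((j + 1 : ℕ) : ℝ≥0) / n, G ∘ Φ, Nat.one_le_iff_ne_zero.2 (by positivity),
      fun i j hij => ?_, (hG.comp hΦ).cLlip, fun ω => rfl⟩, iSup₂_le fun p hp => ?_⟩
  · exact div_lt_div_of_pos_right (by exact_mod_cast Nat.succ_lt_succ hij) (by positivity)
  calc ∫⁻ ω, ENNReal.ofReal |G ω - G (Φ fun j => ω.1 ((j + 1 : ℕ) / n))|
        ∂(p : Measure (OmegaC d))
      ≤ ∫⁻ ω, (ENNReal.ofReal (K * min 1 (smoothModulus n (ω.1.restrict (Icc (0 : ℝ≥0) (T + 1)))))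
          + ENNReal.ofReal (K * (1 / 2) ^ T)) ∂(p : Measure (OmegaC d)) :=
        lintegral_mono fun ω => (ENNReal.ofReal_le_ofReal (hGΦ ω)).trans ENNReal.ofReal_add_le
    _ ≤ ENNReal.ofReal (ε / 2) + ENNReal.ofReal (ε / 2) := by
        rw [lintegral_add_right _ measurable_const, lintegral_const, measure_univ, mul_one]
        exact add_le_add (hn p hp) (ENNReal.ofReal_le_ofReal hT)
    _ = ENNReal.ofReal ε := by
        rw [← ENNReal.ofReal_add (half_pos hε).le (half_pos hε).le, add_halves]

end PathSpace

theorem stmt15_general {d : ℕ}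
    (P : Set (ProbabilityMeasure (OmegaC d))) (hcomp : IsCompact P)
    (hmom : ∀ (m : ℕ), 1 ≤ m → ∀ t : Fin m → ℝ≥0, StrictMono t →
      ∀ ψ : (Fin m → EuclideanSpace ℝ (Fin d)) → ℝ, CLlip ψ → (∀ x, 0 ≤ ψ x) →
      (⨆ p ∈ P, ∫⁻ ω : OmegaC d, ENNReal.ofReal (ψ (fun i => ω.1 (t i)))
        ∂(p : Measure (OmegaC d))) < ∞) :
    closureInL1 P (LipCyl d) =
      closureInL1 P {Y : OmegaC d → ℝ | Continuous Y ∧ ∃ M : ℝ, ∀ ω, |Y ω| ≤ M} := by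
  refine (closureInL1_subset_closureInL1 (fun Z hZ => (continuous_of_mem_lipCyl hZ).measurable)
    fun Z hZ ε hε => exists_bounded_continuous_approx_of_mem_lipCyl hmom hZ hε).antisymm ?_
  calc closureInL1 P {Y : OmegaC d → ℝ | Continuous Y ∧ ∃ M : ℝ, ∀ ω, |Y ω| ≤ M}
      ⊆ closureInL1 P (rhoLipschitz d) :=
        closureInL1_subset_closureInL1 (fun Y hY => hY.1.measurable) fun Y ⟨hY, M, hM⟩ ε hε =>
          exists_rhoLipschitz_approx_of_continuous hcomp hY hM hε
    _ ⊆ closureInL1 P (LipCyl d) :=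
        closureInL1_subset_closureInL1 (fun G hG => (continuous_of_mem_rhoLipschitz hG).measurable)
          fun G hG ε hε => exists_lipCyl_approx_of_mem_rhoLipschitz hcomp hG hε

/-- `L¹_G(Ω) = 𝕃¹_c`: for a nonempty weakly compact family `𝒫` of Borel probability measures
on `Ω` with uniformly finite moments of cylinder type, the closure of `L_ip(Ω)` in
`(𝕃¹, d)` equals the closure of the bounded continuous functions `C_b(Ω)` in `(𝕃¹, d)`. -/
theorem stmt15 {d : ℕ} (hd : 1 ≤ d)
    (P : Set (ProbabilityMeasure (OmegaC d))) (hne : P.Nonempty) (hcomp : IsCompact P)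
    (hmom : ∀ (m : ℕ), 1 ≤ m → ∀ t : Fin m → ℝ≥0, StrictMono t →
      ∀ ψ : (Fin m → EuclideanSpace ℝ (Fin d)) → ℝ, CLlip ψ → (∀ x, 0 ≤ ψ x) →
      (⨆ p ∈ P, ∫⁻ ω : OmegaC d, ENNReal.ofReal (ψ (fun i => ω.1 (t i)))
        ∂(p : Measure (OmegaC d))) < ∞) :
    closureInL1 P (LipCyl d) =
      closureInL1 P {Y : OmegaC d → ℝ | Continuous Y ∧ ∃ M : ℝ, ∀ ω, |Y ω| ≤ M} :=
  stmt15_general P hcomp hmom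
end
end
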